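/- arXiv:2303.09878 — 6 statements merged into one kernel-verified Lean document; each statement's English description precedes it below -/
import Mathlib

section
/- Let u₁, v₁, u₂, v₂, …, u_{k−1}, v_{k−1} ≥ 2, u_k ≥ 1 and λ ≥ 2 be integers. Let A = A_λ(u₁, v₁, u₂, v₂, …, u_{k−1}, v_{k−1}) and let Λ_λ(u₁, v₁, u₂, v₂, …, u_{k−1}, v_{k−1}, u_k) = {λ₁, …, λ_m} with 1 ≤ λ₁ < ⋯ < λ_m, and put λ̄ = (λ₁, …, λ_m). Then for every integer n with 0 ≤ n < λ^{U_k V_{k−1}} one has R_{A,λ̄}(n) = 1, and for every integer n ≥ λ^{U_k V_{k−1}} one has R_{A,λ̄}(n) = 0. -/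
/-- `Uprod u i = u 0 * u 1 * ⋯ * u (i-1)`, i.e. `U_i = u₁u₂⋯u_i` for the
0-indexed sequence `u`. -/
def Uprod (u : ℕ → ℕ) (i : ℕ) : ℕ := ∏ j ∈ Finset.range i, u j

/-- `S(u₁, v₁, …, u_{k−1}, v_{k−1}, u_k) =
{i₀ + i₁U₁V₁ + ⋯ + i_{k−1}U_{k−1}V_{k−1} : 0 ≤ i_h < u_{h+1}}` (0-indexed). -/
def Sset (u v : ℕ → ℕ) (k : ℕ) : Set ℕ :=
  {s | ∃ i : ℕ → ℕ, (∀ h < k, i h < u h) ∧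
    s = ∑ h ∈ Finset.range k, i h * (Uprod u h * Uprod v h)}

/-- `T(u₁, v₁, …, u_k, v_k) =
{j₀U₁ + j₁U₂V₁ + ⋯ + j_{k−1}U_kV_{k−1} : 0 ≤ j_h < v_{h+1}}` (0-indexed). -/
def Tset (u v : ℕ → ℕ) (k : ℕ) : Set ℕ :=
  {t | ∃ j : ℕ → ℕ, (∀ h < k, j h < v h) ∧
    t = ∑ h ∈ Finset.range k, j h * (Uprod u (h + 1) * Uprod v h)}

/-- `T(u₁, v₁, …, u_k, ∞)`: as `Tset` but with the last digit `j_{k-1}`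
unbounded. -/
def TsetInf (u v : ℕ → ℕ) (k : ℕ) : Set ℕ :=
  {t | ∃ j : ℕ → ℕ, (∀ h, h + 1 < k → j h < v h) ∧
    t = ∑ h ∈ Finset.range k, j h * (Uprod u (h + 1) * Uprod v h)}

/-- `A_λ(T) = {Σ_{t ∈ T} δ_t λ^t : 0 ≤ δ_t < λ, all but finitely many δ_t = 0}`. -/
def Aset (lam : ℕ) (T : Set ℕ) : Set ℕ :=
  {a | ∃ δ : ℕ →₀ ℕ, (∀ t, δ t < lam) ∧ (∀ t, δ t ≠ 0 → t ∈ T) ∧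
    a = δ.sum fun t d => d * lam ^ t}

/-- `R_{A,λ̄}(n) = |{(a₁,…,a_m) ∈ A^m : λ₁a₁ + ⋯ + λ_m a_m = n}|`. -/
noncomputable def R {m : ℕ} (A : Set ℕ) (lam : Fin m → ℕ) (n : ℕ) : ℕ :=
  Set.ncard {a : Fin m → ℕ | (∀ i, a i ∈ A) ∧ ∑ i, lam i * a i = n}

lemma Uprod_succ (r : ℕ → ℕ) (L : ℕ) : Uprod r (L+1) = Uprod r L * r L :=
  Finset.prod_range_succ r L

lemma mr_sum_lt (r d : ℕ → ℕ) (L : ℕ) (hd : ∀ l < L, d l < r l) :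
    ∑ l ∈ Finset.range L, d l * Uprod r l < Uprod r L := by
  induction L with
  | zero => simp [Uprod]
  | succ L ih =>
    rw [Finset.sum_range_succ, Uprod_succ]
    have h1 := ih (fun l hl => hd l (by omega))
    have h2 : d L < r L := hd L (by omega)
    have h4 : d L * Uprod r L ≤ (r L - 1) * Uprod r L :=
      Nat.mul_le_mul_right _ (by omega)
    have h5 : (r L - 1) * Uprod r L + Uprod r L = Uprod r L * r L := by
      have : r L - 1 + 1 = r L := by omega
      calc (r L - 1) * Uprod r L + Uprod r L = (r L - 1 + 1) * Uprod r L := by ring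
        _ = Uprod r L * r L := by rw [this]; ring
    omega

lemma mr_exists (r : ℕ → ℕ) (L : ℕ) (hr : ∀ l < L, 1 ≤ r l) (n : ℕ)
    (hn : n < Uprod r L) :
    ∃ d : ℕ → ℕ, (∀ l < L, d l < r l) ∧ n = ∑ l ∈ Finset.range L, d l * Uprod r l := by
  induction L generalizing n with
  | zero =>
    refine ⟨fun _ => 0, by omega, ?_⟩
    simp [Uprod] at hn ⊢
    omega
  | succ L ih =>
    have hP : 0 < Uprod r L :=
      Finset.prod_pos (fun l hl => hr l (by simpa using Nat.lt_succ_of_lt (Finset.mem_range.mp hl)))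
    have hrem : n % Uprod r L < Uprod r L := Nat.mod_lt _ hP
    obtain ⟨d, hd1, hd2⟩ := ih (fun l hl => hr l (by omega)) _ hrem
    have hq : n / Uprod r L < r L := by
      rw [Uprod_succ] at hn
      exact (Nat.div_lt_iff_lt_mul hP).mpr (by rw [mul_comm]; exact hn)
    refine ⟨fun l => if l = L then n / Uprod r L else d l, ?_, ?_⟩
    · intro l hl
      by_cases h : l = L
      · subst h; simpa using hq
      · simpa [h] using hd1 l (by omega)
    · rw [Finset.sum_range_succ]
      have he : ∑ l ∈ Finset.range L, (if l = L then n / Uprod r L else d l) * Uprod r l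
          = ∑ l ∈ Finset.range L, d l * Uprod r l := by
        apply Finset.sum_congr rfl
        intro l hl
        rw [if_neg (by have := Finset.mem_range.mp hl; omega)]
      rw [he, ← hd2]
      show n = n % Uprod r L + (if L = L then n / Uprod r L else d L) * Uprod r L
      rw [if_pos rfl]
      rw [mul_comm]
      exact (Nat.mod_add_div n (Uprod r L)).symm

lemma mr_unique (r d d' : ℕ → ℕ) (L : ℕ) (hd : ∀ l < L, d l < r l)
    (hd' : ∀ l < L, d' l < r l)
    (heq : ∑ l ∈ Finset.range L, d l * Uprod r l = ∑ l ∈ Finset.range L, d' l * Uprod r l) :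
    ∀ l < L, d l = d' l := by
  induction L with
  | zero => omega
  | succ L ih =>
    rw [Finset.sum_range_succ, Finset.sum_range_succ] at heq
    have h1 := mr_sum_lt r d L (fun l hl => hd l (by omega))
    have h2 := mr_sum_lt r d' L (fun l hl => hd' l (by omega))
    have hP : 0 < Uprod r L := lt_of_le_of_lt (Nat.zero_le _) h1
    have htop : d L = d' L := by
      have e1 : (∑ l ∈ Finset.range L, d l * Uprod r l + d L * Uprod r L) / Uprod r L = d L := by
        rw [Nat.add_mul_div_right _ _ hP, Nat.div_eq_of_lt h1, Nat.zero_add]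
      have e2 : (∑ l ∈ Finset.range L, d' l * Uprod r l + d' L * Uprod r L) / Uprod r L = d' L := by
        rw [Nat.add_mul_div_right _ _ hP, Nat.div_eq_of_lt h2, Nat.zero_add]
      rw [← e1, ← e2, heq]
    rw [htop] at heq
    have hlow : ∑ l ∈ Finset.range L, d l * Uprod r l = ∑ l ∈ Finset.range L, d' l * Uprod r l := by
      omega
    intro l hl
    rcases Nat.lt_succ_iff_lt_or_eq.mp hl with h | h
    · exact ih (fun l hl => hd l (by omega)) (fun l hl => hd' l (by omega)) hlow l h
    · subst h; exact htop

def rIntl (u v : ℕ → ℕ) (l : ℕ) : ℕ := if l % 2 = 0 then u (l / 2) else v (l / 2)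

lemma rIntl_apply (u v : ℕ → ℕ) (l : ℕ) (hp : l % 2 = 0) : rIntl u v l = u (l/2) :=
  if_pos hp

lemma rIntl_apply' (u v : ℕ → ℕ) (l : ℕ) (hp : ¬ (l % 2 = 0)) : rIntl u v l = v (l/2) :=
  if_neg hp

lemma Uprod_intl (u v : ℕ → ℕ) (h : ℕ) :
    Uprod (rIntl u v) (2*h) = Uprod u h * Uprod v h ∧
    Uprod (rIntl u v) (2*h+1) = Uprod u (h+1) * Uprod v h := by
  induction h with
  | zero =>
    constructor
    · simp [Uprod]
    · show Uprod (rIntl u v) (0+1) = _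
      rw [Uprod_succ, rIntl_apply u v 0 (by omega)]
      simp [Uprod]
  | succ h ih =>
    have heven : Uprod (rIntl u v) (2*(h+1)) = Uprod u (h+1) * Uprod v (h+1) := by
      rw [show 2*(h+1) = (2*h+1)+1 by ring, Uprod_succ (rIntl u v) (2*h+1), ih.2,
        rIntl_apply' u v (2*h+1) (by omega), show (2*h+1)/2 = h by omega, Uprod_succ v h]
      ring
    refine ⟨heven, ?_⟩
    rw [Uprod_succ (rIntl u v) (2*(h+1)), heven, rIntl_apply u v (2*(h+1)) (by omega),
      show (2*(h+1))/2 = h+1 by omega, Uprod_succ u (h+1)]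
    ring

lemma sum_interleave (f : ℕ → ℕ) (K : ℕ) :
    ∑ l ∈ Finset.range (2*K+1), f l =
    ∑ h ∈ Finset.range (K+1), f (2*h) + ∑ h ∈ Finset.range K, f (2*h+1) := by
  induction K with
  | zero => simp
  | succ K ih =>
    rw [show 2*(K+1)+1 = (2*K+1)+1+1 by ring, Finset.sum_range_succ, Finset.sum_range_succ, ih,
      Finset.sum_range_succ (fun h => f (2*h)) (K+1),
      Finset.sum_range_succ (fun h => f (2*h+1)) K,
      show 2*(K+1) = 2*K+1+1 by ring]
    simp only [show 2*K+1+1 = 2*K+2 by omega]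
    omega

set_option maxHeartbeats 1000000 in
theorem stmt3 (lam k : ℕ) (hlam : 2 ≤ lam) (hk : 1 ≤ k) (u v : ℕ → ℕ)
    (hu : ∀ h, h + 1 < k → 2 ≤ u h) (hv : ∀ h, h + 1 < k → 2 ≤ v h)
    (huk : 1 ≤ u (k - 1))
    (A : Set ℕ) (hA : A = Aset lam (Tset u v (k - 1)))
    (m : ℕ) (lamt : Fin m → ℕ) (hpos : ∀ i, 1 ≤ lamt i) (hmono : StrictMono lamt)
    (hΛ : Set.range lamt = (fun s => lam ^ s) '' Sset u v k) :
    (∀ n : ℕ, n < lam ^ (Uprod u k * Uprod v (k - 1)) → R A lamt n = 1) ∧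
    (∀ n : ℕ, lam ^ (Uprod u k * Uprod v (k - 1)) ≤ n → R A lamt n = 0) := by
  classical
  obtain ⟨K, rfl⟩ : ∃ K, k = K + 1 := ⟨k - 1, by omega⟩
  simp only [Nat.add_sub_cancel] at huk hA ⊢
  have hu' : ∀ h < K, 2 ≤ u h := fun h hh => hu h (by omega)
  have hv' : ∀ h < K, 2 ≤ v h := fun h hh => hv h (by omega)
  set D := Uprod u (K+1) * Uprod v K with hD
  -- radix positivity
  have hrpos : ∀ l < 2*K+1, 1 ≤ rIntl u v l := by
    intro l hl
    by_cases hp : l % 2 = 0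
    · rw [rIntl_apply u v l hp]
      have hle : l / 2 ≤ K := by omega
      rcases eq_or_lt_of_le hle with h | h
      · rw [h]; exact huk
      · exact le_trans (by omega) (hu' _ h)
    · rw [rIntl_apply' u v l hp]
      exact le_trans (by omega) (hv' _ (by omega))
  have hUD : Uprod (rIntl u v) (2*K+1) = D := (Uprod_intl u v K).2
  -- interleaved sum identity
  have hST_sum : ∀ i j : ℕ → ℕ,
      (∑ l ∈ Finset.range (2*K+1), (if l % 2 = 0 then i (l/2) else j (l/2)) * Uprod (rIntl u v) l)
      = (∑ h ∈ Finset.range (K+1), i h * (Uprod u h * Uprod v h))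
        + (∑ h ∈ Finset.range K, j h * (Uprod u (h+1) * Uprod v h)) := by
    intro i j
    rw [sum_interleave (fun l => (if l % 2 = 0 then i (l/2) else j (l/2)) * Uprod (rIntl u v) l) K]
    congr 1
    · apply Finset.sum_congr rfl
      intro h _
      rw [if_pos (by omega : 2*h % 2 = 0), show 2*h/2 = h by omega, (Uprod_intl u v h).1]
    · apply Finset.sum_congr rfl
      intro h _
      rw [if_neg (by omega : ¬ ((2*h+1) % 2 = 0)), show (2*h+1)/2 = h by omega,
        (Uprod_intl u v h).2]
  -- digit bound for interleaved digits
  have hdig : ∀ i j : ℕ → ℕ, (∀ h < K+1, i h < u h) → (∀ h < K, j h < v h) →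
      ∀ l < 2*K+1, (if l % 2 = 0 then i (l/2) else j (l/2)) < rIntl u v l := by
    intro i j hi hj l hl
    by_cases hp : l % 2 = 0
    · rw [if_pos hp, rIntl_apply u v l hp]; exact hi _ (by omega)
    · rw [if_neg hp, rIntl_apply' u v l hp]; exact hj _ (by omega)
  have hST_lt : ∀ s ∈ Sset u v (K+1), ∀ t ∈ Tset u v K, s + t < D := by
    rintro s ⟨i, hi, rfl⟩ t ⟨j, hj, rfl⟩
    have h := mr_sum_lt (rIntl u v) (fun l => if l % 2 = 0 then i (l/2) else j (l/2))
      (2*K+1) (hdig i j hi hj)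
    rwa [hST_sum i j, hUD] at h
  have hST_cover : ∀ p < D, ∃ s ∈ Sset u v (K+1), ∃ t ∈ Tset u v K, p = s + t := by
    intro p hp
    obtain ⟨d, hd1, hd2⟩ := mr_exists (rIntl u v) (2*K+1) hrpos p (by rwa [hUD])
    refine ⟨∑ h ∈ Finset.range (K+1), d (2*h) * (Uprod u h * Uprod v h),
      ⟨fun h => d (2*h), ?_, rfl⟩,
      ∑ h ∈ Finset.range K, d (2*h+1) * (Uprod u (h+1) * Uprod v h),
      ⟨fun h => d (2*h+1), ?_, rfl⟩, ?_⟩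
    · intro h hh
      have := hd1 (2*h) (by omega)
      rwa [rIntl_apply u v (2*h) (by omega), show 2*h/2 = h by omega] at this
    · intro h hh
      have := hd1 (2*h+1) (by omega)
      rwa [rIntl_apply' u v (2*h+1) (by omega), show (2*h+1)/2 = h by omega] at this
    · rw [hd2, ← hST_sum (fun h => d (2*h)) (fun h => d (2*h+1))]
      apply Finset.sum_congr rfl
      intro l hl
      have hl' := Finset.mem_range.mp hl
      by_cases hp2 : l % 2 = 0
      · rw [if_pos hp2, show 2*(l/2) = l by omega]
      · rw [if_neg hp2, show 2*(l/2)+1 = l by omega]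
  have hST_unique : ∀ s ∈ Sset u v (K+1), ∀ t ∈ Tset u v K,
      ∀ s' ∈ Sset u v (K+1), ∀ t' ∈ Tset u v K, s + t = s' + t' → s = s' ∧ t = t' := by
    rintro s ⟨i, hi, rfl⟩ t ⟨j, hj, rfl⟩ s' ⟨i', hi', rfl⟩ t' ⟨j', hj', rfl⟩ hE
    have h1 := mr_unique (rIntl u v)
      (fun l => if l % 2 = 0 then i (l/2) else j (l/2))
      (fun l => if l % 2 = 0 then i' (l/2) else j' (l/2))
      (2*K+1) (hdig i j hi hj) (hdig i' j' hi' hj')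
      (by rw [hST_sum i j, hST_sum i' j']; exact hE)
    constructor
    · apply Finset.sum_congr rfl
      intro h hh
      have hh' := Finset.mem_range.mp hh
      have := h1 (2*h) (by omega)
      simp only [if_pos (by omega : 2*h % 2 = 0), show 2*h/2 = h by omega] at this
      rw [this]
    · apply Finset.sum_congr rfl
      intro h hh
      have hh' := Finset.mem_range.mp hh
      have := h1 (2*h+1) (by omega)
      simp only [if_neg (by omega : ¬ ((2*h+1) % 2 = 0)), show (2*h+1)/2 = h by omega] at this
      rw [this]
  have hpow : ∀ L : ℕ, Uprod (fun _ => lam) L = lam ^ L := fun L => by simp [Uprod]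
  -- σ : Fin m → S
  set σ : Fin m → ℕ := fun i => Nat.log lam (lamt i) with hσ
  have hσ1 : ∀ i, σ i ∈ Sset u v (K+1) ∧ lam ^ σ i = lamt i := by
    intro i
    have hmem : lamt i ∈ Set.range lamt := ⟨i, rfl⟩
    rw [hΛ] at hmem
    obtain ⟨s, hs, hse⟩ := hmem
    have hlog : σ i = s := by
      rw [hσ]
      simp only []
      rw [← hse]
      exact Nat.log_pow hlam s
    rw [hlog]
    exact ⟨hs, hse⟩
  have hσS : ∀ s ∈ Sset u v (K+1), ∃ i, σ i = s := by
    intro s hs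
    have : lam ^ s ∈ Set.range lamt := by rw [hΛ]; exact ⟨s, hs, rfl⟩
    obtain ⟨i, hi⟩ := this
    refine ⟨i, ?_⟩
    rw [hσ]
    simp only []
    rw [hi]
    exact Nat.log_pow hlam s
  have hσinj : Function.Injective σ := by
    intro a b hab
    apply hmono.injective
    rw [← (hσ1 a).2, ← (hσ1 b).2, hab]
  have hzeroS : (0:ℕ) ∈ Sset u v (K+1) := by
    refine ⟨fun _ => 0, ?_, by simp⟩
    intro h hh
    show (0:ℕ) < u h
    rcases (by omega : h < K ∨ h = K) with h' | h'
    · have := hu' h h'; omega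
    · subst h'; omega
  have hzeroT : (0:ℕ) ∈ Tset u v K := by
    refine ⟨fun _ => 0, ?_, by simp⟩
    intro h hh
    show (0:ℕ) < v h
    have := hv' h hh; omega
  have hSD : ∀ s ∈ Sset u v (K+1), s < D := fun s hs => by
    simpa using hST_lt s hs 0 hzeroT
  have hTD : ∀ t ∈ Tset u v K, t < D := fun t ht => by
    simpa using hST_lt 0 hzeroS t ht
  set Tfin : Finset ℕ := (Finset.range D).filter (fun t => t ∈ Tset u v K) with hTfin
  have hTfin_mem : ∀ t, t ∈ Tfin ↔ t ∈ Tset u v K := by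
    intro t
    rw [hTfin, Finset.mem_filter, Finset.mem_range]
    exact ⟨fun h => h.2, fun h => ⟨hTD t h, h⟩⟩
  -- reindexing lemma
  have hreindex : ∀ g : ℕ → ℕ,
      ∑ i : Fin m, ∑ t ∈ Tfin, g (σ i + t) = ∑ p ∈ Finset.range D, g p := by
    intro g
    rw [← Finset.sum_product']
    apply Finset.sum_bij (fun (q : Fin m × ℕ) (_ : q ∈ Finset.univ ×ˢ Tfin) => σ q.1 + q.2)
    · rintro ⟨i, t⟩ hq
      have ht : t ∈ Tset u v K := (hTfin_mem t).mp (Finset.mem_product.mp hq).2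
      exact Finset.mem_range.mpr (hST_lt _ (hσ1 i).1 _ ht)
    · rintro ⟨i, t⟩ hq ⟨i', t'⟩ hq' he
      have ht := (hTfin_mem t).mp (Finset.mem_product.mp hq).2
      have ht' := (hTfin_mem t').mp (Finset.mem_product.mp hq').2
      obtain ⟨h1, h2⟩ := hST_unique _ (hσ1 i).1 _ ht _ (hσ1 i').1 _ ht' he
      exact Prod.ext (hσinj h1) h2
    · intro p hp
      obtain ⟨s, hs, t, ht, rfl⟩ := hST_cover p (Finset.mem_range.mp hp)
      obtain ⟨i, rfl⟩ := hσS s hs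
      exact ⟨(i, t), Finset.mem_product.mpr ⟨Finset.mem_univ i, (hTfin_mem t).mpr ht⟩, rfl⟩
    · intro q hq
      rfl
  -- analysis of an arbitrary solution tuple
  have hanalysis : ∀ a : Fin m → ℕ, (∀ i, a i ∈ A) → ∃ E2 : ℕ → ℕ,
      (∀ p, E2 p < lam) ∧ (∀ i, a i = ∑ t ∈ Tfin, E2 (σ i + t) * lam ^ t) ∧
      (∑ i, lamt i * a i = ∑ p ∈ Finset.range D, E2 p * lam ^ p) := by
    intro a ha
    have hδ : ∀ i : Fin m, ∃ δ : ℕ →₀ ℕ, (∀ t, δ t < lam) ∧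
        (∀ t, δ t ≠ 0 → t ∈ Tset u v K) ∧ a i = δ.sum fun t d => d * lam ^ t := by
      intro i
      have := ha i
      rw [hA] at this
      exact this
    choose δ hδ1 hδ2 hδ3 using hδ
    haveI : Nonempty (Fin m) := by
      obtain ⟨i, _⟩ := hσS 0 hzeroS
      exact ⟨i⟩
    have hinv : ∀ p : ℕ, ∃ (i : Fin m) (t : ℕ), p < D → t ∈ Tfin ∧ σ i + t = p := by
      intro p
      by_cases hp : p < D
      · obtain ⟨s, hs, t, ht, rfl⟩ := hST_cover p hp
        obtain ⟨i, rfl⟩ := hσS s hs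
        exact ⟨i, t, fun _ => ⟨(hTfin_mem t).mpr ht, rfl⟩⟩
      · exact ⟨Classical.arbitrary _, 0, fun h => absurd h hp⟩
    choose I τ hIτ using hinv
    set E2 : ℕ → ℕ := fun p => if p < D then δ (I p) (τ p) else 0 with hE2
    have hE2lt : ∀ p, E2 p < lam := by
      intro p
      rw [hE2]
      by_cases hp : p < D
      · simpa [hp] using hδ1 (I p) (τ p)
      · simp [hp]; omega
    have hE2eq : ∀ (i : Fin m) (t : ℕ), t ∈ Tfin → E2 (σ i + t) = δ i t := by
      intro i t ht
      have htT := (hTfin_mem t).mp ht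
      have hpd : σ i + t < D := hST_lt _ (hσ1 i).1 _ htT
      rw [hE2]
      simp only []
      rw [if_pos hpd]
      obtain ⟨h1, h2⟩ := hIτ (σ i + t) hpd
      obtain ⟨e1, e2⟩ := hST_unique _ (hσ1 (I (σ i + t))).1 _ ((hTfin_mem _).mp h1)
        _ (hσ1 i).1 _ htT h2
      rw [hσinj e1, e2]
    have hai : ∀ i, a i = ∑ t ∈ Tfin, E2 (σ i + t) * lam ^ t := by
      intro i
      rw [hδ3 i, Finsupp.sum_of_support_subset (δ i)
        (fun t ht => (hTfin_mem t).mpr (hδ2 i t (Finsupp.mem_support_iff.mp ht)))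
        _ (fun t _ => by simp)]
      apply Finset.sum_congr rfl
      intro t ht
      rw [hE2eq i t ht]
    refine ⟨E2, hE2lt, hai, ?_⟩
    calc ∑ i, lamt i * a i
        = ∑ i, ∑ t ∈ Tfin, E2 (σ i + t) * lam ^ (σ i + t) := by
          apply Finset.sum_congr rfl
          intro i _
          rw [hai i, Finset.mul_sum]
          apply Finset.sum_congr rfl
          intro t _
          rw [← (hσ1 i).2, pow_add]
          ring
      _ = ∑ p ∈ Finset.range D, E2 p * lam ^ p := hreindex (fun p => E2 p * lam ^ p)
  constructor
  · -- existence and uniqueness for n < lam ^ D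
    intro n hn
    obtain ⟨e, he1, he2⟩ := mr_exists (fun _ => lam) D (fun _ _ => by show (1:ℕ) ≤ lam; omega) n
      (by rw [hpow]; exact hn)
    have he2' : n = ∑ p ∈ Finset.range D, e p * lam ^ p := by
      rw [he2]
      apply Finset.sum_congr rfl
      intro p _
      rw [hpow]
    set E : ℕ → ℕ := fun p => if p < D then e p else 0 with hE
    have hElt : ∀ p, E p < lam := by
      intro p
      rw [hE]
      by_cases hp : p < D
      · simpa [hp] using he1 p hp
      · simp [hp]; omega
    have hEsum : n = ∑ p ∈ Finset.range D, E p * lam ^ p := by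
      rw [he2']
      apply Finset.sum_congr rfl
      intro p hp
      rw [hE]
      simp [Finset.mem_range.mp hp]
    set astar : Fin m → ℕ := fun i => ∑ t ∈ Tfin, E (σ i + t) * lam ^ t with hastar
    have hmemA : ∀ i, astar i ∈ A := by
      intro i
      rw [hA]
      refine ⟨Finsupp.onFinset Tfin (fun t => if t ∈ Tfin then E (σ i + t) else 0)
        (fun t h => by by_contra hc; exact h (if_neg hc)), ?_, ?_, ?_⟩
      · intro t
        dsimp only [Finsupp.onFinset_apply]
        by_cases hc : t ∈ Tfin
        · simpa [hc] using hElt (σ i + t)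
        · simp [hc]; omega
      · intro t h
        dsimp only [Finsupp.onFinset_apply] at h
        by_cases hc : t ∈ Tfin
        · exact (hTfin_mem t).mp hc
        · exact absurd (if_neg hc) h
      · rw [Finsupp.sum_of_support_subset _ Finsupp.support_onFinset_subset _ (fun t _ => by simp)]
        rw [hastar]
        simp only []
        apply Finset.sum_congr rfl
        intro t ht
        simp [Finsupp.onFinset_apply, ht]
    have hsumstar : ∑ i, lamt i * astar i = n := by
      conv_rhs => rw [hEsum]
      rw [← hreindex (fun p => E p * lam ^ p)]
      apply Finset.sum_congr rfl
      intro i _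
      rw [hastar]
      simp only []
      rw [Finset.mul_sum]
      apply Finset.sum_congr rfl
      intro t _
      rw [← (hσ1 i).2, pow_add]
      ring
    have hset : {a : Fin m → ℕ | (∀ i, a i ∈ A) ∧ ∑ i, lamt i * a i = n} = {astar} := by
      apply Set.eq_singleton_iff_unique_mem.mpr
      refine ⟨⟨hmemA, hsumstar⟩, ?_⟩
      rintro a ⟨ha, hsum⟩
      obtain ⟨E2, hE2lt, hai, htot⟩ := hanalysis a ha
      have hsums : ∑ p ∈ Finset.range D, E2 p * Uprod (fun _ => lam) p
          = ∑ p ∈ Finset.range D, E p * Uprod (fun _ => lam) p := by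
        have t1 : ∑ p ∈ Finset.range D, E2 p * lam ^ p = ∑ p ∈ Finset.range D, E p * lam ^ p := by
          rw [← htot, hsum]
          exact hEsum
        calc ∑ p ∈ Finset.range D, E2 p * Uprod (fun _ => lam) p
            = ∑ p ∈ Finset.range D, E2 p * lam ^ p :=
              Finset.sum_congr rfl (fun p _ => by rw [hpow])
          _ = ∑ p ∈ Finset.range D, E p * lam ^ p := t1
          _ = ∑ p ∈ Finset.range D, E p * Uprod (fun _ => lam) p :=
              Finset.sum_congr rfl (fun p _ => by rw [hpow])
      have hEE2 := mr_unique (fun _ => lam) E2 E D (fun l _ => hE2lt l) (fun l _ => hElt l) hsums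
      funext i
      rw [hai i, hastar]
      simp only []
      apply Finset.sum_congr rfl
      intro t ht
      have htT := (hTfin_mem t).mp ht
      rw [hEE2 _ (hST_lt _ (hσ1 i).1 _ htT)]
    unfold R
    rw [hset, Set.ncard_singleton]
  · -- no representations for n ≥ lam ^ D
    intro n hn
    have hempty : {a : Fin m → ℕ | (∀ i, a i ∈ A) ∧ ∑ i, lamt i * a i = n} = ∅ := by
      rw [Set.eq_empty_iff_forall_notMem]
      rintro a ⟨ha, hsum⟩
      obtain ⟨E2, hE2lt, _, htot⟩ := hanalysis a ha
      have hlt : ∑ p ∈ Finset.range D, E2 p * lam ^ p < lam ^ D := by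
        have h := mr_sum_lt (fun _ => lam) E2 D (fun l _ => hE2lt l)
        rw [hpow] at h
        calc ∑ p ∈ Finset.range D, E2 p * lam ^ p
            = ∑ p ∈ Finset.range D, E2 p * Uprod (fun _ => lam) p :=
              Finset.sum_congr rfl (fun p _ => by rw [hpow])
          _ < lam ^ D := h
      omega
    unfold R
    rw [hempty, Set.ncard_empty]
end

section
/- Let u₁, v₁, u₂, v₂, …, u_k, v_k ≥ 2 and λ ≥ 2 be integers. Let A = A_λ(u₁, v₁, u₂, v₂, …, u_k, v_k) and let Λ_λ(u₁, v₁, u₂, v₂, …, u_{k−1}, v_{k−1}, u_k) = {λ₁, …, λ_m} with 1 ≤ λ₁ < ⋯ < λ_m, and put λ̄ = (λ₁, …, λ_m). Then for every integer n with 0 ≤ n < λ^{U_k V_k} one has R_{A,λ̄}(n) = 1, and for every integer n ≥ λ^{U_k V_k} one has R_{A,λ̄}(n) = 0. -/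
section Aux

open Finset

def mrdig (b : ℕ → ℕ) (x l : ℕ) : ℕ := x / Uprod b l % b l

lemma uprod_zero (b : ℕ → ℕ) : Uprod b 0 = 1 := by simp [Uprod]

lemma uprod_succ (b : ℕ → ℕ) (i : ℕ) : Uprod b (i+1) = Uprod b i * b i :=
  Finset.prod_range_succ b i

lemma uprod_succ' (b : ℕ → ℕ) (i : ℕ) :
    Uprod b (i+1) = b 0 * Uprod (fun j => b (j+1)) i := by
  rw [Uprod, Finset.prod_range_succ', Uprod, mul_comm]

lemma uprod_pos {b : ℕ → ℕ} {n : ℕ} (hb : ∀ l < n, 1 ≤ b l) : 0 < Uprod b n := by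
  apply Finset.prod_pos
  intro l hl; exact hb l (mem_range.mp hl)

lemma mr_sum_lt_s4 {b c : ℕ → ℕ} {n : ℕ} (hb : ∀ l < n, 1 ≤ b l)
    (hc : ∀ l < n, c l < b l) :
    ∑ l ∈ range n, c l * Uprod b l < Uprod b n := by
  induction n with
  | zero => simp [uprod_zero]
  | succ n ih =>
    rw [Finset.sum_range_succ, uprod_succ]
    have h1 : ∑ l ∈ range n, c l * Uprod b l < Uprod b n :=
      ih (fun l hl => hb l (hl.trans (Nat.lt_succ_self n)))
        (fun l hl => hc l (hl.trans (Nat.lt_succ_self n)))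
    have h2 : c n + 1 ≤ b n := hc n (Nat.lt_succ_self n)
    calc ∑ l ∈ range n, c l * Uprod b l + c n * Uprod b n
        < Uprod b n + c n * Uprod b n := by omega
      _ = (1 + c n) * Uprod b n := by ring
      _ ≤ b n * Uprod b n := Nat.mul_le_mul_right _ (by omega)
      _ = Uprod b n * b n := mul_comm _ _

lemma mr_dig_sum {b c : ℕ → ℕ} {n : ℕ} (hc : ∀ l < n, c l < b l) :
    ∀ l < n, mrdig b (∑ h ∈ range n, c h * Uprod b h) l = c l := by
  induction n generalizing b c with
  | zero => exact fun l hl => absurd hl (Nat.not_lt_zero l)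
  | succ n ih =>
    have hb0 : 0 < b 0 := lt_of_le_of_lt (Nat.zero_le _) (hc 0 (Nat.succ_pos n))
    have hx : ∑ h ∈ range (n+1), c h * Uprod b h
        = c 0 + b 0 * ∑ h ∈ range n, c (h+1) * Uprod (fun j => b (j+1)) h := by
      rw [Finset.sum_range_succ']
      rw [Finset.mul_sum]
      simp only [uprod_succ', uprod_zero, mul_one]
      rw [add_comm]
      congr 1
      apply Finset.sum_congr rfl
      intros; ring
    intro l hl
    rw [hx]
    match l with
    | 0 =>
      simp only [mrdig, uprod_zero, Nat.div_one]
      rw [Nat.add_mul_mod_self_left, Nat.mod_eq_of_lt (hc 0 (Nat.succ_pos n))]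
    | l+1 =>
      have : mrdig b (c 0 + b 0 * ∑ h ∈ range n, c (h+1) * Uprod (fun j => b (j+1)) h) (l+1)
          = mrdig (fun j => b (j+1)) (∑ h ∈ range n, c (h+1) * Uprod (fun j => b (j+1)) h) l := by
        simp only [mrdig, uprod_succ']
        rw [← Nat.div_div_eq_div_mul]
        have hdv : (c 0 + b 0 * ∑ h ∈ range n, c (h+1) * Uprod (fun j => b (j+1)) h) / b 0
            = ∑ h ∈ range n, c (h+1) * Uprod (fun j => b (j+1)) h := by
          rw [Nat.add_mul_div_left _ _ hb0, Nat.div_eq_of_lt (hc 0 (Nat.succ_pos n))]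
          omega
        rw [hdv]
      rw [this]
      exact ih (fun h hh => hc (h+1) (by omega)) l (by omega)

lemma mr_expand {b : ℕ → ℕ} {n x : ℕ} (hb : ∀ l < n, 1 ≤ b l) (hx : x < Uprod b n) :
    x = ∑ l ∈ range n, mrdig b x l * Uprod b l := by
  induction n generalizing b x with
  | zero => simp [uprod_zero] at hx; simp [hx]
  | succ n ih =>
    have hb0 : 0 < b 0 := hb 0 (Nat.succ_pos n)
    rw [Finset.sum_range_succ']
    have hrw : ∀ l, mrdig b x (l+1) * Uprod b (l+1)
        = b 0 * (mrdig (fun j => b (j+1)) (x / b 0) l * Uprod (fun j => b (j+1)) l) := by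
      intro l
      simp only [mrdig, uprod_succ']
      rw [← Nat.div_div_eq_div_mul]
      ring
    simp only [hrw]
    rw [← Finset.mul_sum]
    have hx' : x / b 0 < Uprod (fun j => b (j+1)) n := by
      rw [Nat.div_lt_iff_lt_mul hb0]
      rw [uprod_succ'] at hx
      calc x < b 0 * Uprod (fun j => b (j+1)) n := hx
        _ = Uprod (fun j => b (j+1)) n * b 0 := mul_comm _ _
    rw [← ih (fun l hl => hb (l+1) (by omega)) hx']
    simp only [mrdig, uprod_zero, Nat.div_one, mul_one]
    exact (Nat.div_add_mod x (b 0)).symm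

lemma mrdig_lt {b : ℕ → ℕ} {l : ℕ} (h : 0 < b l) (x : ℕ) : mrdig b x l < b l :=
  Nat.mod_lt _ h

def wseq (u v : ℕ → ℕ) (l : ℕ) : ℕ := if l % 2 = 0 then u (l/2) else v (l/2)

lemma wseq_even (u v : ℕ → ℕ) (h : ℕ) : wseq u v (2*h) = u h := by
  simp only [wseq]
  have h1 : (2*h) % 2 = 0 := by omega
  have h2 : (2*h) / 2 = h := by omega
  rw [h1, h2]; simp

lemma wseq_odd (u v : ℕ → ℕ) (h : ℕ) : wseq u v (2*h+1) = v h := by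
  simp only [wseq]
  have h1 : (2*h+1) % 2 = 1 := by omega
  have h2 : (2*h+1) / 2 = h := by omega
  rw [h1, h2]; simp

lemma uprod_wseq_even (u v : ℕ → ℕ) :
    ∀ h, Uprod (wseq u v) (2*h) = Uprod u h * Uprod v h ∧
      Uprod (wseq u v) (2*h+1) = Uprod u (h+1) * Uprod v h := by
  intro h
  induction h with
  | zero =>
    constructor
    · simp [uprod_zero]
    · have : 2*0+1 = 0+1 := by omega
      rw [this, uprod_succ, uprod_zero]
      have : wseq u v 0 = u 0 := wseq_even u v 0
      rw [this, uprod_succ, uprod_zero, uprod_zero]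
      simp
  | succ h ih =>
    have he : 2*(h+1) = (2*h+1)+1 := by omega
    constructor
    · rw [he, uprod_succ, ih.2]
      have : wseq u v (2*h+1) = v h := wseq_odd u v h
      rw [this, uprod_succ (v) h]
      ring
    · rw [he]
      rw [uprod_succ, uprod_succ, ih.2]
      have h1 : wseq u v (2*h+1) = v h := wseq_odd u v h
      have h2 : wseq u v (2*h+1+1) = u (h+1) := by
        have : 2*h+1+1 = 2*(h+1) := by omega
        rw [this]; exact wseq_even u v (h+1)
      rw [h1, h2, uprod_succ v h, uprod_succ u (h+1)]
      ring

lemma sum_range_two_mul (f : ℕ → ℕ) (k : ℕ) :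
    ∑ l ∈ Finset.range (2*k), f l
      = ∑ h ∈ Finset.range k, f (2*h) + ∑ h ∈ Finset.range k, f (2*h+1) := by
  induction k with
  | zero => simp
  | succ k ih =>
    have : 2*(k+1) = (2*k)+1+1 := by omega
    rw [this, Finset.sum_range_succ, Finset.sum_range_succ, ih,
      Finset.sum_range_succ, Finset.sum_range_succ]
    omega

lemma wseq_ge {u v : ℕ → ℕ} {k : ℕ} (hu : ∀ h < k, 2 ≤ u h) (hv : ∀ h < k, 2 ≤ v h) :
    ∀ l < 2*k, 2 ≤ wseq u v l := by
  intro l hl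
  rcases Nat.even_or_odd l with ⟨h, hh⟩ | ⟨h, hh⟩
  · have : l = 2*h := by omega
    rw [this, wseq_even]; exact hu h (by omega)
  · have : l = 2*h+1 := by omega
    rw [this, wseq_odd]; exact hv h (by omega)

/-- recomposition: for digit tuples i, j the number s+t has the interleaved digits. -/
lemma rec_lemma {u v : ℕ → ℕ} {k : ℕ} (hu : ∀ h < k, 2 ≤ u h) (hv : ∀ h < k, 2 ≤ v h)
    {i j : ℕ → ℕ} (hi : ∀ h < k, i h < u h) (hj : ∀ h < k, j h < v h) :
    (∑ h ∈ Finset.range k, i h * Uprod (wseq u v) (2*h))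
      + (∑ h ∈ Finset.range k, j h * Uprod (wseq u v) (2*h+1)) < Uprod (wseq u v) (2*k)
    ∧ (∀ h < k, mrdig (wseq u v) ((∑ h ∈ Finset.range k, i h * Uprod (wseq u v) (2*h))
      + (∑ h ∈ Finset.range k, j h * Uprod (wseq u v) (2*h+1))) (2*h) = i h)
    ∧ (∀ h < k, mrdig (wseq u v) ((∑ h ∈ Finset.range k, i h * Uprod (wseq u v) (2*h))
      + (∑ h ∈ Finset.range k, j h * Uprod (wseq u v) (2*h+1))) (2*h+1) = j h) := by
  set w := wseq u v with hw
  set c : ℕ → ℕ := fun l => if l % 2 = 0 then i (l/2) else j (l/2) with hc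
  have hcl : ∀ l < 2*k, c l < w l := by
    intro l hl
    rcases Nat.even_or_odd l with ⟨h, hh⟩ | ⟨h, hh⟩
    · have hl2 : l = 2*h := by omega
      have : c l = i h := by rw [hc]; simp only [hl2]; rw [if_pos (by omega)]; congr 1; omega
      rw [this, hl2, hw, wseq_even]; exact hi h (by omega)
    · have hl2 : l = 2*h+1 := by omega
      have : c l = j h := by rw [hc]; simp only [hl2]; rw [if_neg (by omega)]; congr 1; omega
      rw [this, hl2, hw, wseq_odd]; exact hj h (by omega)
  have hsum : (∑ h ∈ Finset.range k, i h * Uprod w (2*h))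
      + (∑ h ∈ Finset.range k, j h * Uprod w (2*h+1))
      = ∑ l ∈ Finset.range (2*k), c l * Uprod w l := by
    rw [sum_range_two_mul (fun l => c l * Uprod w l) k]
    congr 1
    · apply Finset.sum_congr rfl; intro h _
      congr 1
      rw [hc]; simp only []; rw [if_pos (by omega)]; congr 1; omega
    · apply Finset.sum_congr rfl; intro h _
      congr 1
      rw [hc]; simp only []; rw [if_neg (by omega)]; congr 1; omega
  rw [hsum]
  refine ⟨mr_sum_lt_s4 (fun l hl => by linarith [wseq_ge hu hv l hl]) hcl, ?_, ?_⟩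
  · intro h hh
    have := mr_dig_sum hcl (2*h) (by omega)
    rw [this]
    rw [hc]; simp only []; rw [if_pos (by omega)]; congr 1; omega
  · intro h hh
    have := mr_dig_sum hcl (2*h+1) (by omega)
    rw [this]
    rw [hc]; simp only []; rw [if_neg (by omega)]; congr 1; omega

lemma mem_Sset_iff {u v : ℕ → ℕ} {k : ℕ} {s : ℕ} :
    s ∈ Sset u v k ↔ ∃ i : ℕ → ℕ, (∀ h < k, i h < u h) ∧
      s = ∑ h ∈ Finset.range k, i h * Uprod (wseq u v) (2*h) := by
  have : ∀ i : ℕ → ℕ, ∑ h ∈ Finset.range k, i h * (Uprod u h * Uprod v h)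
      = ∑ h ∈ Finset.range k, i h * Uprod (wseq u v) (2*h) := by
    intro i; apply Finset.sum_congr rfl; intro h _
    rw [(uprod_wseq_even u v h).1]
  constructor
  · rintro ⟨i, hi, rfl⟩; exact ⟨i, hi, this i⟩
  · rintro ⟨i, hi, rfl⟩; exact ⟨i, hi, (this i).symm⟩

lemma mem_Tset_iff {u v : ℕ → ℕ} {k : ℕ} {t : ℕ} :
    t ∈ Tset u v k ↔ ∃ j : ℕ → ℕ, (∀ h < k, j h < v h) ∧
      t = ∑ h ∈ Finset.range k, j h * Uprod (wseq u v) (2*h+1) := by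
  have : ∀ j : ℕ → ℕ, ∑ h ∈ Finset.range k, j h * (Uprod u (h+1) * Uprod v h)
      = ∑ h ∈ Finset.range k, j h * Uprod (wseq u v) (2*h+1) := by
    intro j; apply Finset.sum_congr rfl; intro h _
    rw [(uprod_wseq_even u v h).2]
  constructor
  · rintro ⟨j, hj, rfl⟩; exact ⟨j, hj, this j⟩
  · rintro ⟨j, hj, rfl⟩; exact ⟨j, hj, (this j).symm⟩

section STfacts
variable {u v : ℕ → ℕ} {k : ℕ}

lemma zero_mem_Sset (hu : ∀ h < k, 2 ≤ u h) : 0 ∈ Sset u v k :=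
  ⟨fun _ => 0, fun h hh => by linarith [hu h hh], by simp⟩

lemma zero_mem_Tset (hv : ∀ h < k, 2 ≤ v h) : 0 ∈ Tset u v k :=
  ⟨fun _ => 0, fun h hh => by linarith [hv h hh], by simp⟩

lemma add_lt_NN (hu : ∀ h < k, 2 ≤ u h) (hv : ∀ h < k, 2 ≤ v h) {s t : ℕ} (hs : s ∈ Sset u v k) (ht : t ∈ Tset u v k) :
    s + t < Uprod (wseq u v) (2*k) := by
  obtain ⟨i, hi, rfl⟩ := mem_Sset_iff.mp hs
  obtain ⟨j, hj, rfl⟩ := mem_Tset_iff.mp ht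
  exact (rec_lemma hu hv hi hj).1

lemma Sset_lt (hu : ∀ h < k, 2 ≤ u h) (hv : ∀ h < k, 2 ≤ v h) {s : ℕ} (hs : s ∈ Sset u v k) : s < Uprod (wseq u v) (2*k) := by
  have := add_lt_NN hu hv hs (zero_mem_Tset hv)
  omega

lemma Tset_lt (hu : ∀ h < k, 2 ≤ u h) (hv : ∀ h < k, 2 ≤ v h) {t : ℕ} (ht : t ∈ Tset u v k) : t < Uprod (wseq u v) (2*k) := by
  have := add_lt_NN hu hv (zero_mem_Sset hu) ht
  omega

/-- uniqueness of the `s + t` decomposition -/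
lemma add_inj (hu : ∀ h < k, 2 ≤ u h) (hv : ∀ h < k, 2 ≤ v h) {s t s' t' : ℕ} (hs : s ∈ Sset u v k) (ht : t ∈ Tset u v k)
    (hs' : s' ∈ Sset u v k) (ht' : t' ∈ Tset u v k) (he : s + t = s' + t') :
    s = s' ∧ t = t' := by
  obtain ⟨i, hi, rfl⟩ := mem_Sset_iff.mp hs
  obtain ⟨j, hj, rfl⟩ := mem_Tset_iff.mp ht
  obtain ⟨i', hi', rfl⟩ := mem_Sset_iff.mp hs'
  obtain ⟨j', hj', rfl⟩ := mem_Tset_iff.mp ht'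
  have H := rec_lemma hu hv hi hj
  have H' := rec_lemma hu hv hi' hj'
  constructor
  · apply Finset.sum_congr rfl
    intro h hh
    rw [Finset.mem_range] at hh
    rw [← H.2.1 h hh, ← H'.2.1 h hh, he]
  · apply Finset.sum_congr rfl
    intro h hh
    rw [Finset.mem_range] at hh
    rw [← H.2.2 h hh, ← H'.2.2 h hh, he]

/-- existence of the decomposition -/
lemma dec_lemma (hu : ∀ h < k, 2 ≤ u h) (hv : ∀ h < k, 2 ≤ v h) {x : ℕ} (hx : x < Uprod (wseq u v) (2*k)) :
    ∃ s ∈ Sset u v k, ∃ t ∈ Tset u v k, x = s + t := by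
  have hw1 : ∀ l < 2*k, 1 ≤ wseq u v l := fun l hl => by linarith [wseq_ge hu hv l hl]
  have hexp := mr_expand hw1 hx
  rw [sum_range_two_mul (fun l => mrdig (wseq u v) x l * Uprod (wseq u v) l) k] at hexp
  refine ⟨∑ h ∈ Finset.range k, mrdig (wseq u v) x (2*h) * Uprod (wseq u v) (2*h), ?_,
    ∑ h ∈ Finset.range k, mrdig (wseq u v) x (2*h+1) * Uprod (wseq u v) (2*h+1), ?_, hexp⟩
  · exact mem_Sset_iff.mpr ⟨fun h => mrdig (wseq u v) x (2*h), fun h hh => by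
      have := mrdig_lt (b := wseq u v) (l := 2*h) (by rw [wseq_even]; linarith [hu h hh]) x
      rwa [wseq_even] at this, rfl⟩
  · exact mem_Tset_iff.mpr ⟨fun h => mrdig (wseq u v) x (2*h+1), fun h hh => by
      have := mrdig_lt (b := wseq u v) (l := 2*h+1) (by rw [wseq_odd]; linarith [hv h hh]) x
      rwa [wseq_odd] at this, rfl⟩

end STfacts

end Aux

theorem stmt4 (lam k : ℕ) (hlam : 2 ≤ lam) (hk : 1 ≤ k) (u v : ℕ → ℕ)
    (hu : ∀ h < k, 2 ≤ u h) (hv : ∀ h < k, 2 ≤ v h)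
    (A : Set ℕ) (hA : A = Aset lam (Tset u v k))
    (m : ℕ) (lamt : Fin m → ℕ) (hpos : ∀ i, 1 ≤ lamt i) (hmono : StrictMono lamt)
    (hΛ : Set.range lamt = (fun s => lam ^ s) '' Sset u v k) :
    (∀ n : ℕ, n < lam ^ (Uprod u k * Uprod v k) → R A lamt n = 1) ∧
    (∀ n : ℕ, lam ^ (Uprod u k * Uprod v k) ≤ n → R A lamt n = 0) := by
  classical
  subst hA
  have hlam0 : 0 < lam := by omega
  have hNNe : Uprod u k * Uprod v k = Uprod (wseq u v) (2 * k) :=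
    ((uprod_wseq_even u v k).1).symm
  set NN := Uprod (wseq u v) (2 * k) with hNNdef
  have hUcb : ∀ N : ℕ, Uprod (fun _ => lam) N = lam ^ N := by
    intro N; rw [Uprod, Finset.prod_const, Finset.card_range]
  have hσex : ∀ i : Fin m, ∃ s, s ∈ Sset u v k ∧ lamt i = lam ^ s := by
    intro i
    have hmem : lamt i ∈ Set.range lamt := ⟨i, rfl⟩
    rw [hΛ] at hmem
    obtain ⟨s, hs, he⟩ := hmem
    exact ⟨s, hs, he.symm⟩
  set σ : Fin m → ℕ := fun i => (hσex i).choose with hσdef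
  have hσS : ∀ i, σ i ∈ Sset u v k := fun i => (hσex i).choose_spec.1
  have hσlam : ∀ i, lamt i = lam ^ σ i := fun i => (hσex i).choose_spec.2
  have powinj : Function.Injective (fun s : ℕ => lam ^ s) := Nat.pow_right_injective hlam
  have hσinj : Function.Injective σ := by
    intro i i' h
    apply hmono.injective
    rw [hσlam i, hσlam i', h]
  have hσsurj : ∀ s ∈ Sset u v k, ∃ i, σ i = s := by
    intro s hs
    have hmem : lam ^ s ∈ Set.range lamt := by rw [hΛ]; exact ⟨s, hs, rfl⟩
    obtain ⟨i, hi⟩ := hmem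
    refine ⟨i, powinj ?_⟩
    show lam ^ σ i = lam ^ s
    rw [← hσlam i, hi]
  set Tf : Finset ℕ := (Finset.range NN).filter (· ∈ Tset u v k) with hTfdef
  have hTfmem : ∀ t, t ∈ Tf ↔ t ∈ Tset u v k := by
    intro t
    rw [hTfdef, Finset.mem_filter, Finset.mem_range]
    exact ⟨fun h => h.2, fun h => ⟨Tset_lt hu hv h, h⟩⟩
  set dg : ℕ → ℕ → ℕ := fun n x => mrdig (fun _ => lam) n x with hdgdef
  have hdglt : ∀ n x, dg n x < lam :=
    fun n x => mrdig_lt (b := fun _ => lam) (l := x) hlam0 n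
  set F : ℕ → Fin m → ℕ := fun n i => ∑ t ∈ Tf, dg n (σ i + t) * lam ^ t with hFdef
  have hpairinj : ∀ p : Fin m × ℕ, p.2 ∈ Tset u v k → ∀ q : Fin m × ℕ, q.2 ∈ Tset u v k →
      σ p.1 + p.2 = σ q.1 + q.2 → p = q := by
    intro p hp q hq he
    obtain ⟨h1, h2⟩ := add_inj hu hv (hσS p.1) hp (hσS q.1) hq he
    have h3 : p.1 = q.1 := hσinj h1
    exact Prod.ext h3 h2
  have central : ∀ n : ℕ, ∀ a : Fin m → ℕ, (∀ i, a i ∈ Aset lam (Tset u v k)) →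
      ∑ i, lamt i * a i = n → n < lam ^ NN ∧ ∀ i, a i = F n i := by
    intro n a ha hsum
    simp only [Aset, Set.mem_setOf_eq] at ha
    choose δ hδlt hδT hδeq using ha
    have hsupp : ∀ i, (δ i).support ⊆ Tf := by
      intro i t ht
      exact (hTfmem t).mpr (hδT i t (Finsupp.mem_support_iff.mp ht))
    have haF : ∀ i, a i = ∑ t ∈ Tf, (δ i) t * lam ^ t := by
      intro i
      rw [hδeq i]
      exact Finsupp.sum_of_support_subset _ (hsupp i) _ (fun t _ => zero_mul _)
    have h1 : n = ∑ p ∈ Finset.univ ×ˢ Tf, (δ p.1) p.2 * lam ^ (σ p.1 + p.2) := by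
      rw [← hsum, Finset.sum_product]
      apply Finset.sum_congr rfl
      intro i _
      rw [haF i, hσlam i, Finset.mul_sum]
      apply Finset.sum_congr rfl
      intro t _
      rw [pow_add]; ring
    set C : ℕ → ℕ := fun x =>
      ∑ p ∈ (Finset.univ ×ˢ Tf).filter (fun p : Fin m × ℕ => σ p.1 + p.2 = x), (δ p.1) p.2
      with hCdef
    have hmaps : ∀ p ∈ Finset.univ ×ˢ Tf, σ p.1 + p.2 ∈ Finset.range NN := by
      intro p hp
      rw [Finset.mem_range]
      exact add_lt_NN hu hv (hσS p.1) ((hTfmem p.2).mp (Finset.mem_product.mp hp).2)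
    have h2 : n = ∑ x ∈ Finset.range NN, C x * lam ^ x := by
      rw [h1, ← Finset.sum_fiberwise_of_maps_to hmaps
        (fun p : Fin m × ℕ => (δ p.1) p.2 * lam ^ (σ p.1 + p.2))]
      apply Finset.sum_congr rfl
      intro x _
      rw [hCdef]
      simp only []
      rw [Finset.sum_mul]
      apply Finset.sum_congr rfl
      intro p hp
      rw [(Finset.mem_filter.mp hp).2]
    have hfibeq : ∀ p ∈ Finset.univ ×ˢ Tf,
        (Finset.univ ×ˢ Tf).filter (fun q : Fin m × ℕ => σ q.1 + q.2 = σ p.1 + p.2) = {p} := by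
      intro p hp
      ext q
      rw [Finset.mem_filter, Finset.mem_singleton]
      constructor
      · rintro ⟨hq, he⟩
        exact hpairinj q ((hTfmem q.2).mp (Finset.mem_product.mp hq).2) p
          ((hTfmem p.2).mp (Finset.mem_product.mp hp).2) he
      · rintro rfl
        exact ⟨hp, rfl⟩
    have hCp : ∀ p ∈ Finset.univ ×ˢ Tf, C (σ p.1 + p.2) = (δ p.1) p.2 := by
      intro p hp
      rw [hCdef]
      simp only []
      rw [hfibeq p hp, Finset.sum_singleton]
    have hClt : ∀ x, C x < lam := by
      intro x
      by_cases hx : ∃ p, p ∈ Finset.univ ×ˢ Tf ∧ σ p.1 + p.2 = x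
      · obtain ⟨p, hp, he⟩ := hx
        rw [← he, hCp p hp]
        exact hδlt p.1 p.2
      · have hemp : (Finset.univ ×ˢ Tf).filter (fun p : Fin m × ℕ => σ p.1 + p.2 = x) = ∅ := by
          rw [Finset.filter_eq_empty_iff]
          intro p hp he
          exact hx ⟨p, hp, he⟩
        rw [hCdef]
        simp only []
        rw [hemp, Finset.sum_empty]
        omega
    have h2' : n = ∑ x ∈ Finset.range NN, C x * Uprod (fun _ => lam) x := by
      rw [h2]; apply Finset.sum_congr rfl; intro x _; rw [hUcb]
    have hnlt : n < lam ^ NN := by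
      rw [← hUcb NN]
      calc n = ∑ x ∈ Finset.range NN, C x * Uprod (fun _ => lam) x := h2'
        _ < Uprod (fun _ => lam) NN :=
          mr_sum_lt_s4 (fun l _ => by omega) (fun l _ => hClt l)
    refine ⟨hnlt, fun i => ?_⟩
    rw [haF i, hFdef]
    simp only []
    apply Finset.sum_congr rfl
    intro t ht
    congr 1
    have hx : σ i + t < NN :=
      Finset.mem_range.mp (hmaps (i, t) (Finset.mem_product.mpr ⟨Finset.mem_univ i, ht⟩))
    have hd : dg n (σ i + t) = C (σ i + t) := by
      rw [hdgdef]
      simp only []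
      rw [h2']
      exact mr_dig_sum (fun l _ => hClt l) _ hx
    rw [hd, hCp (i, t) (Finset.mem_product.mpr ⟨Finset.mem_univ i, ht⟩)]
  have exist : ∀ n : ℕ, n < lam ^ NN →
      (∀ i, F n i ∈ Aset lam (Tset u v k)) ∧ ∑ i, lamt i * F n i = n := by
    intro n hn
    constructor
    · intro i
      simp only [Aset, Set.mem_setOf_eq]
      refine ⟨Finsupp.onFinset Tf (fun t => if t ∈ Tf then dg n (σ i + t) else 0)
        (fun t ht => by by_contra h; simp [h] at ht), ?_, ?_, ?_⟩
      · intro t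
        simp only [Finsupp.onFinset_apply]
        split
        · exact hdglt n _
        · omega
      · intro t ht
        simp only [Finsupp.onFinset_apply] at ht
        by_cases h : t ∈ Tf
        · exact (hTfmem t).mp h
        · simp [h] at ht
      · rw [Finsupp.sum_of_support_subset (s := Tf) _ Finsupp.support_onFinset_subset
          (fun t d => d * lam ^ t) (fun t _ => zero_mul _)]
        rw [hFdef]
        simp only []
        apply Finset.sum_congr rfl
        intro t ht
        simp only [Finsupp.onFinset_apply, if_pos ht]
    · have hexp : n = ∑ x ∈ Finset.range NN, mrdig (fun _ => lam) n x * Uprod (fun _ => lam) x :=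
        mr_expand (fun l _ => by omega) (by rw [hUcb]; exact hn)
      have hlhs : ∑ i, lamt i * F n i
          = ∑ p ∈ Finset.univ ×ˢ Tf, dg n (σ p.1 + p.2) * lam ^ (σ p.1 + p.2) := by
        rw [Finset.sum_product]
        apply Finset.sum_congr rfl
        intro i _
        rw [hFdef]
        simp only []
        rw [hσlam i, Finset.mul_sum]
        apply Finset.sum_congr rfl
        intro t _
        rw [pow_add]; ring
      rw [hlhs]
      conv_rhs => rw [hexp]
      apply Finset.sum_bij (fun (p : Fin m × ℕ) (_ : p ∈ Finset.univ ×ˢ Tf) => σ p.1 + p.2)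
      · intro p hp
        rw [Finset.mem_range]
        exact add_lt_NN hu hv (hσS p.1) ((hTfmem p.2).mp (Finset.mem_product.mp hp).2)
      · intro p hp q hq he
        exact hpairinj p ((hTfmem p.2).mp (Finset.mem_product.mp hp).2) q
          ((hTfmem q.2).mp (Finset.mem_product.mp hq).2) he
      · intro x hx
        obtain ⟨s, hs, t, htm, rfl⟩ := dec_lemma hu hv (Finset.mem_range.mp hx)
        obtain ⟨i, rfl⟩ := hσsurj s hs
        exact ⟨(i, t), Finset.mem_product.mpr ⟨Finset.mem_univ i, (hTfmem t).mpr htm⟩, rfl⟩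
      · intro p hp
        simp only [hdgdef]
        rw [hUcb]
  constructor
  · intro n hn
    rw [hNNe] at hn
    have hset : {a : Fin m → ℕ | (∀ i, a i ∈ Aset lam (Tset u v k)) ∧ ∑ i, lamt i * a i = n}
        = {F n} := by
      ext a
      simp only [Set.mem_setOf_eq, Set.mem_singleton_iff]
      constructor
      · rintro ⟨h1, h2⟩
        funext i
        exact (central n a h1 h2).2 i
      · rintro rfl
        exact ⟨(exist n hn).1, (exist n hn).2⟩
    unfold R
    rw [hset]
    exact Set.ncard_singleton _
  · intro n hn
    rw [hNNe] at hn
    have hset : {a : Fin m → ℕ | (∀ i, a i ∈ Aset lam (Tset u v k)) ∧ ∑ i, lamt i * a i = n}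
        = ∅ := by
      ext a
      simp only [Set.mem_setOf_eq, Set.mem_empty_iff_false, iff_false, not_and]
      intro h1 h2
      have := (central n a h1 h2).1
      omega
    unfold R
    rw [hset]
    exact Set.ncard_empty _
end

section
/- Let λ ≥ 2, let A ⊊ ℕ, let Λ = {λ₁, …, λ_m} ⊂ ℤ⁺ with 1 ≤ λ₁ < ⋯ < λ_m, λ̄ = (λ₁, …, λ_m), and suppose R_{A,λ̄}(n) = 1 for every nonnegative integer n. Assume the integers u₁, v₁, u₂, v₂, …, u_h, v_h ≥ 2 and u ≥ 1 satisfy Λ ∩ [0, λ^{u U_h V_h} − 1] = Λ_λ(u₁, v₁, …, u_h, v_h, u), A ∩ [0, λ^{u U_h V_h} − 1] = A_λ(u₁, v₁, …, u_h, v_h), λ^{u U_h V_h} ∈ Λ and λ^{u U_h V_h} ∉ A. Then Λ ∩ [0, λ^{(u+1) U_h V_h} − 1] = Λ_λ(u₁, v₁, …, u_h, v_h, u+1), A ∩ [0, λ^{(u+1) U_h V_h} − 1] = A_λ(u₁, v₁, …, u_h, v_h), and λ^{(u+1) U_h V_h} ∈ A ∪ Λ but λ^{(u+1) U_h V_h}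 ∉ A ∩ Λ. -/
namespace Stmt6Aux

lemma up_succ (b : ℕ → ℕ) (K : ℕ) : Uprod b (K+1) = Uprod b K * b K :=
  Finset.prod_range_succ b K

lemma up_pos (b : ℕ → ℕ) (K : ℕ) (hb : ∀ k < K, 1 ≤ b k) : 0 < Uprod b K := by
  apply Finset.prod_pos
  intro k hk
  exact hb k (Finset.mem_range.mp hk)

lemma mr_lt (b d : ℕ → ℕ) (K : ℕ) (hd : ∀ k < K, d k < b k) :
    ∑ k ∈ Finset.range K, d k * Uprod b k < Uprod b K := by
  induction K with
  | zero => simp [Uprod]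
  | succ K ih =>
    rw [Finset.sum_range_succ, up_succ]
    have h1 : ∑ k ∈ Finset.range K, d k * Uprod b k < Uprod b K :=
      ih (fun k hk => hd k (Nat.lt_succ_of_lt hk))
    have h2 : d K < b K := hd K (Nat.lt_succ_self K)
    calc ∑ k ∈ Finset.range K, d k * Uprod b k + d K * Uprod b K
        < Uprod b K + d K * Uprod b K := by omega
      _ = (d K + 1) * Uprod b K := by ring
      _ ≤ b K * Uprod b K := Nat.mul_le_mul_right _ h2
      _ = Uprod b K * b K := Nat.mul_comm _ _

lemma mr_inj (b d e : ℕ → ℕ) (K : ℕ) (hd : ∀ k < K, d k < b k) (he : ∀ k < K, e k < b k)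
    (hsum : ∑ k ∈ Finset.range K, d k * Uprod b k = ∑ k ∈ Finset.range K, e k * Uprod b k) :
    ∀ k < K, d k = e k := by
  induction K with
  | zero => intro k hk; omega
  | succ K ih =>
    rw [Finset.sum_range_succ, Finset.sum_range_succ] at hsum
    have hdl : ∑ k ∈ Finset.range K, d k * Uprod b k < Uprod b K :=
      mr_lt b d K (fun k hk => hd k (Nat.lt_succ_of_lt hk))
    have hel : ∑ k ∈ Finset.range K, e k * Uprod b k < Uprod b K :=
      mr_lt b e K (fun k hk => he k (Nat.lt_succ_of_lt hk))
    have htop : d K = e K := by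
      rcases Nat.lt_trichotomy (d K) (e K) with hlt | heq | hgt
      · exfalso
        have hx : d K * Uprod b K + Uprod b K ≤ e K * Uprod b K := by
          have := Nat.mul_le_mul_right (Uprod b K) (Nat.succ_le_of_lt hlt)
          simpa [Nat.succ_mul] using this
        omega
      · exact heq
      · exfalso
        have hx : e K * Uprod b K + Uprod b K ≤ d K * Uprod b K := by
          have := Nat.mul_le_mul_right (Uprod b K) (Nat.succ_le_of_lt hgt)
          simpa [Nat.succ_mul] using this
        omega
    have hlow : ∑ k ∈ Finset.range K, d k * Uprod b k = ∑ k ∈ Finset.range K, e k * Uprod b k := by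
      rw [htop] at hsum; omega
    intro k hk
    rcases Nat.lt_succ_iff_lt_or_eq.mp hk with hk' | hk'
    · exact ih (fun k hk => hd k (Nat.lt_succ_of_lt hk)) (fun k hk => he k (Nat.lt_succ_of_lt hk)) hlow k hk'
    · subst hk'; exact htop

lemma mr_exists (b : ℕ → ℕ) (K : ℕ) (n : ℕ) (hn : n < Uprod b K) :
    ∃ d : ℕ → ℕ, (∀ k < K, d k < b k) ∧ n = ∑ k ∈ Finset.range K, d k * Uprod b k := by
  induction K generalizing n with
  | zero => exact ⟨fun _ => 0, fun k hk => absurd hk (Nat.not_lt_zero k), by simpa [Uprod] using hn⟩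
  | succ K ih =>
    rw [up_succ] at hn
    have hU : 0 < Uprod b K := by
      rcases Nat.eq_zero_or_pos (Uprod b K) with h0 | h0
      · rw [h0] at hn; omega
      · exact h0
    have hq : n / Uprod b K < b K := Nat.div_lt_of_lt_mul (by omega)
    have hr : n % Uprod b K < Uprod b K := Nat.mod_lt _ hU
    obtain ⟨d', hd', hsum'⟩ := ih (n % Uprod b K) hr
    refine ⟨fun k => if k = K then n / Uprod b K else d' k, ?_, ?_⟩
    · intro k hk
      by_cases hkK : k = K
      · simp [hkK, hq]
      · simpa [hkK] using hd' k (by omega)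
    · rw [Finset.sum_range_succ]
      have : ∑ k ∈ Finset.range K, (if k = K then n / Uprod b K else d' k) * Uprod b k
          = ∑ k ∈ Finset.range K, d' k * Uprod b k := by
        apply Finset.sum_congr rfl
        intro k hk
        have : k ≠ K := by exact Nat.ne_of_lt (Finset.mem_range.mp hk)
        simp [this]
      rw [this, ← hsum']
      simpa using (Nat.mod_add_div' n (Uprod b K)).symm



/-- interleaved base sequence: slots 2g ↦ u g, 2g+1 ↦ v g, slot 2h ↦ c. -/
def bb (u v : ℕ → ℕ) (h c : ℕ) : ℕ → ℕ :=
  fun k => if k = 2*h then c else if k % 2 = 0 then u (k/2) else v (k/2)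

def ilv (i j : ℕ → ℕ) : ℕ → ℕ := fun k => if k % 2 = 0 then i (k/2) else j (k/2)

lemma bb_even (u v : ℕ → ℕ) (h c g : ℕ) (hg : g < h) : bb u v h c (2*g) = u g := by
  unfold bb
  rw [if_neg (by omega)]
  simp [Nat.mul_div_cancel_left, Nat.mul_mod_right]
lemma bb_odd (u v : ℕ → ℕ) (h c g : ℕ) : bb u v h c (2*g+1) = v g := by
  unfold bb
  rw [if_neg (by omega), if_neg (by omega)]
  congr 1
  omega
lemma bb_top (u v : ℕ → ℕ) (h c : ℕ) : bb u v h c (2*h) = c := by simp [bb]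

lemma up_update (u : ℕ → ℕ) (h c g : ℕ) (hg : g ≤ h) :
    Uprod (Function.update u h c) g = Uprod u g := by
  unfold Uprod
  apply Finset.prod_congr rfl
  intro x hx
  have : x ≠ h := by have := Finset.mem_range.mp hx; omega
  simp [Function.update_of_ne this]

lemma wb_even (u v : ℕ → ℕ) (h c : ℕ) : ∀ g ≤ h, Uprod (bb u v h c) (2*g) = Uprod u g * Uprod v g := by
  intro g
  induction g with
  | zero => intro _; simp [Uprod]
  | succ g ih =>
    intro hg
    have hgh : g < h := by omega
    have h1 : 2*(g+1) = (2*g+1)+1 := by ring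
    rw [h1, up_succ, bb_odd]
    have h2 : 2*g+1 = (2*g)+1 := rfl
    rw [h2, up_succ, bb_even u v h c g hgh, ih (by omega)]
    show Uprod u g * Uprod v g * u g * v g = Uprod u (g+1) * Uprod v (g+1)
    rw [up_succ, up_succ]
    ring

lemma wb_odd (u v : ℕ → ℕ) (h c : ℕ) : ∀ g < h, Uprod (bb u v h c) (2*g+1) = Uprod u (g+1) * Uprod v g := by
  intro g hg
  have h2 : 2*g+1 = (2*g)+1 := rfl
  rw [h2, up_succ, bb_even u v h c g hg, wb_even u v h c g (by omega), up_succ]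
  ring

lemma sum_ilv_odd (H : ℕ) (f : ℕ → ℕ) :
    ∑ k ∈ Finset.range (2*H+1), f k
      = ∑ g ∈ Finset.range (H+1), f (2*g) + ∑ g ∈ Finset.range H, f (2*g+1) := by
  induction H with
  | zero => simp
  | succ H ih =>
    have h1 : 2*(H+1)+1 = (2*H+1) + 1 + 1 := by ring
    rw [h1, Finset.sum_range_succ, Finset.sum_range_succ, ih]
    rw [Finset.sum_range_succ (fun g => f (2*g)) (H+1), Finset.sum_range_succ (fun g => f (2*g+1)) H]
    have e1 : 2*H+1 = 2*H+1 := rfl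
    have e2 : 2*H+1+1 = 2*(H+1) := by ring
    rw [e2]
    ring


lemma sum_ilv_even (H : ℕ) (f : ℕ → ℕ) :
    ∑ k ∈ Finset.range (2*H), f k
      = ∑ g ∈ Finset.range H, f (2*g) + ∑ g ∈ Finset.range H, f (2*g+1) := by
  induction H with
  | zero => simp
  | succ H ih =>
    have h1 : 2*(H+1) = (2*H) + 1 + 1 := by ring
    rw [h1, Finset.sum_range_succ, Finset.sum_range_succ, ih]
    rw [Finset.sum_range_succ (fun g => f (2*g)) H, Finset.sum_range_succ (fun g => f (2*g+1)) H]
    ring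

section Struct

variable {u v : ℕ → ℕ} {h uu : ℕ}

lemma ilv_even (i j : ℕ → ℕ) (g : ℕ) : ilv i j (2*g) = i g := by
  simp [ilv, Nat.mul_div_cancel_left, Nat.mul_mod_right]
lemma ilv_odd (i j : ℕ → ℕ) (g : ℕ) : ilv i j (2*g+1) = j g := by
  unfold ilv
  rw [if_neg (by omega)]
  congr 1
  omega

lemma key_sum (c : ℕ) (i j : ℕ → ℕ) :
    (∑ g ∈ Finset.range (h+1), i g * (Uprod (Function.update u h c) g * Uprod v g))
      + ∑ g ∈ Finset.range h, j g * (Uprod u (g+1) * Uprod v g)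
    = ∑ k ∈ Finset.range (2*h+1), ilv i j k * Uprod (bb u v h c) k := by
  rw [sum_ilv_odd]
  congr 1
  · apply Finset.sum_congr rfl
    intro g hg
    have hg' : g ≤ h := by have := Finset.mem_range.mp hg; omega
    rw [ilv_even, wb_even u v h c g hg', up_update u h c g hg']
  · apply Finset.sum_congr rfl
    intro g hg
    have hg' : g < h := Finset.mem_range.mp hg
    rw [ilv_odd, wb_odd u v h c g hg']

lemma ilv_bound (c : ℕ) {i j : ℕ → ℕ}
    (hi : ∀ g < h+1, i g < Function.update u h c g) (hj : ∀ g < h, j g < v g) :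
    ∀ k < 2*h+1, ilv i j k < bb u v h c k := by
  intro k hk
  rcases Nat.even_or_odd k with ⟨g, hg⟩ | ⟨g, hg⟩
  · have hk2 : k = 2*g := by omega
    subst hk2
    rw [ilv_even]
    by_cases hgh : g = h
    · rw [hgh, bb_top]
      have := hi h (by omega)
      simpa using this
    · have hgh' : g < h := by omega
      rw [bb_even u v h c g hgh']
      have := hi g (by omega)
      rwa [Function.update_of_ne hgh] at this
  · have hk2 : k = 2*g+1 := by omega
    subst hk2
    rw [ilv_odd, bb_odd]
    exact hj g (by omega)

lemma T_lt (hu : ∀ g < h, 1 ≤ u g) (hv : ∀ g < h, 1 ≤ v g) {t : ℕ}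
    (ht : t ∈ Tset u v h) : t < Uprod u h * Uprod v h := by
  obtain ⟨j, hj, rfl⟩ := ht
  have e1 : ∑ g ∈ Finset.range h, j g * (Uprod u (g+1) * Uprod v g)
      = ∑ k ∈ Finset.range (2*h), ilv (fun _ => 0) j k * Uprod (bb u v h 1) k := by
    rw [sum_ilv_even]
    have : ∑ g ∈ Finset.range h, ilv (fun _ => 0) j (2*g) * Uprod (bb u v h 1) (2*g) = 0 := by
      apply Finset.sum_eq_zero
      intro g _
      rw [ilv_even]
      simp
    rw [this, Nat.zero_add]
    apply Finset.sum_congr rfl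
    intro g hg
    have hg' : g < h := Finset.mem_range.mp hg
    rw [ilv_odd, wb_odd u v h 1 g hg']
  rw [e1]
  have e2 : Uprod u h * Uprod v h = Uprod (bb u v h 1) (2*h) := (wb_even u v h 1 h le_rfl).symm
  rw [e2]
  apply mr_lt
  intro k hk
  rcases Nat.even_or_odd k with ⟨g, hg⟩ | ⟨g, hg⟩
  · have hk2 : k = 2*g := by omega
    subst hk2
    rw [ilv_even, bb_even u v h 1 g (by omega)]
    exact hu g (by omega)
  · have hk2 : k = 2*g+1 := by omega
    subst hk2
    rw [ilv_odd, bb_odd]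
    exact hj g (by omega)

lemma S0_lt (hu : ∀ g < h, 1 ≤ u g) (hv : ∀ g < h, 1 ≤ v g) {d : ℕ}
    (hd : d ∈ Sset u v h) : d < Uprod u h * Uprod v h := by
  obtain ⟨i, hi, rfl⟩ := hd
  have e1 : ∑ g ∈ Finset.range h, i g * (Uprod u g * Uprod v g)
      = ∑ k ∈ Finset.range (2*h), ilv i (fun _ => 0) k * Uprod (bb u v h 1) k := by
    rw [sum_ilv_even]
    have : ∑ g ∈ Finset.range h, ilv i (fun _ => 0) (2*g+1) * Uprod (bb u v h 1) (2*g+1) = 0 := by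
      apply Finset.sum_eq_zero
      intro g _
      rw [ilv_odd]
      simp
    rw [this, Nat.add_zero]
    apply Finset.sum_congr rfl
    intro g hg
    have hg' : g < h := Finset.mem_range.mp hg
    rw [ilv_even, wb_even u v h 1 g (by omega)]
  rw [e1]
  have e2 : Uprod u h * Uprod v h = Uprod (bb u v h 1) (2*h) := (wb_even u v h 1 h le_rfl).symm
  rw [e2]
  apply mr_lt
  intro k hk
  rcases Nat.even_or_odd k with ⟨g, hg⟩ | ⟨g, hg⟩
  · have hk2 : k = 2*g := by omega
    subst hk2
    rw [ilv_even, bb_even u v h 1 g (by omega)]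
    exact hi g (by omega)
  · have hk2 : k = 2*g+1 := by omega
    subst hk2
    rw [ilv_odd, bb_odd]
    exact hv g (by omega)


lemma mem_S_top {c s : ℕ} :
    s ∈ Sset (Function.update u h c) v (h+1) ↔
      ∃ d ∈ Sset u v h, ∃ k, k < c ∧ s = d + k * (Uprod u h * Uprod v h) := by
  constructor
  · rintro ⟨i, hi, rfl⟩
    refine ⟨∑ g ∈ Finset.range h, i g * (Uprod u g * Uprod v g), ⟨i, ?_, rfl⟩, i h, ?_, ?_⟩
    · intro g hg
      have := hi g (by omega)
      rwa [Function.update_of_ne (by omega)] at this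
    · have := hi h (by omega)
      rwa [Function.update_self] at this
    · rw [Finset.sum_range_succ, up_update u h c h le_rfl]
      congr 1
      apply Finset.sum_congr rfl
      intro g hg
      have hg' : g ≤ h := by have := Finset.mem_range.mp hg; omega
      rw [up_update u h c g hg']
  · rintro ⟨d, ⟨i, hi, rfl⟩, k, hk, rfl⟩
    refine ⟨Function.update i h k, ?_, ?_⟩
    · intro g hg
      by_cases hgh : g = h
      · rw [hgh, Function.update_self, Function.update_self]
        exact hk
      · rw [Function.update_of_ne hgh, Function.update_of_ne hgh]
        exact hi g (by omega)
    · rw [Finset.sum_range_succ, up_update u h c h le_rfl, Function.update_self]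
      congr 1
      apply Finset.sum_congr rfl
      intro g hg
      have hg' : g < h := Finset.mem_range.mp hg
      rw [Function.update_of_ne (by omega : g ≠ h), up_update u h c g (by omega)]

lemma S_top_lt {c s : ℕ} (hc : 1 ≤ c) (hu : ∀ g < h, 1 ≤ u g) (hv : ∀ g < h, 1 ≤ v g)
    (hs : s ∈ Sset (Function.update u h c) v (h+1)) :
    s < c * (Uprod u h * Uprod v h) := by
  obtain ⟨d, hd, k, hk, rfl⟩ := mem_S_top.mp hs
  have h1 : d < Uprod u h * Uprod v h := S0_lt hu hv hd
  have h2 : k * (Uprod u h * Uprod v h) ≤ (c-1) * (Uprod u h * Uprod v h) :=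
    Nat.mul_le_mul_right _ (by omega)
  have h3 : c * (Uprod u h * Uprod v h) = (c-1) * (Uprod u h * Uprod v h) + Uprod u h * Uprod v h := by
    conv_lhs => rw [show c = (c-1)+1 by omega]
    rw [Nat.add_mul, Nat.one_mul]
  omega

lemma add_inj {s s' t t' : ℕ}
    (hs : s ∈ Sset (Function.update u h (uu+1)) v (h+1))
    (hs' : s' ∈ Sset (Function.update u h (uu+1)) v (h+1))
    (ht : t ∈ Tset u v h) (ht' : t' ∈ Tset u v h)
    (heq : s + t = s' + t') : s = s' ∧ t = t' := by
  obtain ⟨i, hi, rfl⟩ := hs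
  obtain ⟨i', hi', rfl⟩ := hs'
  obtain ⟨j, hj, rfl⟩ := ht
  obtain ⟨j', hj', rfl⟩ := ht'
  rw [key_sum (uu+1) i j, key_sum (uu+1) i' j'] at heq
  have hdig := mr_inj _ _ _ _ (ilv_bound (uu+1) hi hj) (ilv_bound (uu+1) hi' hj') heq
  constructor
  · apply Finset.sum_congr rfl
    intro g hg
    have hg' : g < h + 1 := Finset.mem_range.mp hg
    have := hdig (2*g) (by omega)
    rw [ilv_even, ilv_even] at this
    rw [this]
  · apply Finset.sum_congr rfl
    intro g hg
    have hg' : g < h := Finset.mem_range.mp hg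
    have := hdig (2*g+1) (by omega)
    rw [ilv_odd, ilv_odd] at this
    rw [this]

lemma add_surj {p : ℕ} (hp : p < (uu+1) * (Uprod u h * Uprod v h)) :
    ∃ s ∈ Sset (Function.update u h (uu+1)) v (h+1), ∃ t ∈ Tset u v h, p = s + t := by
  have hW : p < Uprod (bb u v h (uu+1)) (2*h+1) := by
    rw [up_succ, bb_top, wb_even u v h (uu+1) h le_rfl]
    calc p < (uu+1) * (Uprod u h * Uprod v h) := hp
      _ = Uprod u h * Uprod v h * (uu+1) := by ring
  obtain ⟨D, hD, rfl⟩ := mr_exists _ _ _ hW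
  refine ⟨∑ g ∈ Finset.range (h+1), D (2*g) * (Uprod (Function.update u h (uu+1)) g * Uprod v g),
    ⟨fun g => D (2*g), ?_, rfl⟩,
    ∑ g ∈ Finset.range h, D (2*g+1) * (Uprod u (g+1) * Uprod v g),
    ⟨fun g => D (2*g+1), ?_, rfl⟩, ?_⟩
  · intro g hg
    by_cases hgh : g = h
    · rw [hgh, Function.update_self]
      have := hD (2*h) (by omega)
      rwa [bb_top] at this
    · rw [Function.update_of_ne hgh]
      have := hD (2*g) (by omega)
      rwa [bb_even u v h (uu+1) g (by omega)] at this
  · intro g hg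
    have := hD (2*g+1) (by omega)
    rwa [bb_odd] at this
  · rw [key_sum (uu+1) (fun g => D (2*g)) (fun g => D (2*g+1))]
    apply Finset.sum_congr rfl
    intro k hk
    congr 1
    rcases Nat.even_or_odd k with ⟨g, hg⟩ | ⟨g, hg⟩
    · have hk2 : k = 2*g := by omega
      rw [hk2, ilv_even]
    · have hk2 : k = 2*g+1 := by omega
      rw [hk2, ilv_odd]

lemma sbuddy (hu : ∀ g < h, 2 ≤ u g) (hv : ∀ g < h, 2 ≤ v g) {d : ℕ}
    (hd : d ∈ Sset u v h) (hd0 : d ≠ 0) :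
    ∃ s₀ ∈ Sset u v h, ∃ t₀ ∈ Tset u v h, t₀ ≠ 0 ∧ d + s₀ = t₀ := by
  obtain ⟨i, hi, rfl⟩ := hd
  refine ⟨∑ g ∈ Finset.range h, (if i g = 0 then 0 else u g - i g) * (Uprod u g * Uprod v g),
    ⟨fun g => if i g = 0 then 0 else u g - i g, ?_, rfl⟩,
    ∑ g ∈ Finset.range h, (if i g = 0 then 0 else 1) * (Uprod u (g+1) * Uprod v g),
    ⟨fun g => if i g = 0 then 0 else 1, ?_, rfl⟩, ?_, ?_⟩
  · intro g hg
    have h1 := hu g hg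
    have h2 := hi g hg
    by_cases h0 : i g = 0 <;> simp [h0] <;> omega
  · intro g hg
    have h1 := hv g hg
    by_cases h0 : i g = 0 <;> simp [h0] <;> omega
  · -- t₀ ≠ 0
    have hex : ∃ g, g < h ∧ i g ≠ 0 := by
      by_contra hcon
      push_neg at hcon
      apply hd0
      apply Finset.sum_eq_zero
      intro g hg
      rw [hcon g (Finset.mem_range.mp hg)]
      ring
    obtain ⟨g₀, hg₀, hig₀⟩ := hex
    intro hzero
    have hterm : (if i g₀ = 0 then 0 else 1) * (Uprod u (g₀+1) * Uprod v g₀) = 0 := by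
      by_contra hne
      have hle : (if i g₀ = 0 then 0 else 1) * (Uprod u (g₀+1) * Uprod v g₀)
          ≤ ∑ g ∈ Finset.range h, (if i g = 0 then 0 else 1) * (Uprod u (g+1) * Uprod v g) :=
        Finset.single_le_sum (f := fun g => (if i g = 0 then 0 else 1) * (Uprod u (g+1) * Uprod v g))
          (fun g _ => Nat.zero_le _) (Finset.mem_range.mpr hg₀)
      omega
    rw [if_neg hig₀, one_mul] at hterm
    have hpos1 : 0 < Uprod u (g₀+1) := up_pos u (g₀+1) (fun k hk => by have := hu k (by omega); omega)
    have hpos2 : 0 < Uprod v g₀ := up_pos v g₀ (fun k hk => by have := hv k (by omega); omega)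
    have := Nat.mul_pos hpos1 hpos2
    omega
  · rw [← Finset.sum_add_distrib]
    apply Finset.sum_congr rfl
    intro g hg
    have hg' : g < h := Finset.mem_range.mp hg
    by_cases h0 : i g = 0
    · simp [h0]
    · rw [if_neg h0, if_neg h0, one_mul, ← Nat.add_mul]
      have : i g + (u g - i g) = u g := by
        have := hi g hg'
        omega
      rw [this, up_succ]
      ring

lemma zero_mem_S0 (hu : ∀ g < h, 1 ≤ u g) : 0 ∈ Sset u v h :=
  ⟨fun _ => 0, fun g hg => hu g hg, by simp⟩

lemma zero_mem_T (hv : ∀ g < h, 1 ≤ v g) : 0 ∈ Tset u v h :=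
  ⟨fun _ => 0, fun g hg => hv g hg, by simp⟩


lemma up_const (B K : ℕ) : Uprod (fun _ => B) K = B^K := by
  simp [Uprod]

end Struct

open scoped Classical in
noncomputable def TTf (u v : ℕ → ℕ) (h : ℕ) : Finset ℕ :=
  (Finset.range (Uprod u h * Uprod v h)).filter (fun t => t ∈ Tset u v h)

open scoped Classical in
noncomputable def SSf (u v : ℕ → ℕ) (h uu : ℕ) : Finset ℕ :=
  (Finset.range ((uu+1) * (Uprod u h * Uprod v h))).filter
    (fun s => s ∈ Sset (Function.update u h (uu+1)) v (h+1))

section Struct2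

variable {u v : ℕ → ℕ} {h uu : ℕ}

lemma mem_TTf {t : ℕ} : t ∈ TTf u v h ↔ t < Uprod u h * Uprod v h ∧ t ∈ Tset u v h := by
  simp [TTf]

lemma mem_SSf {s : ℕ} : s ∈ SSf u v h uu ↔
    s < (uu+1) * (Uprod u h * Uprod v h) ∧ s ∈ Sset (Function.update u h (uu+1)) v (h+1) := by
  simp [SSf]

lemma mem_TTf' (hu : ∀ g < h, 1 ≤ u g) (hv : ∀ g < h, 1 ≤ v g) {t : ℕ}
    (ht : t ∈ Tset u v h) : t ∈ TTf u v h := mem_TTf.mpr ⟨T_lt hu hv ht, ht⟩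

lemma mem_SSf' (hu : ∀ g < h, 1 ≤ u g) (hv : ∀ g < h, 1 ≤ v g) {s : ℕ}
    (hs : s ∈ Sset (Function.update u h (uu+1)) v (h+1)) : s ∈ SSf u v h uu :=
  mem_SSf.mpr ⟨S_top_lt (by omega) hu hv hs, hs⟩

variable {B : ℕ}

lemma mem_Aset_iff (hB : 2 ≤ B) (hu : ∀ g < h, 1 ≤ u g) (hv : ∀ g < h, 1 ≤ v g) {a : ℕ} :
    a ∈ Aset B (Tset u v h) ↔
      ∃ D : ℕ → ℕ, (∀ t, D t < B) ∧ a = ∑ t ∈ TTf u v h, D t * B^t := by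
  constructor
  · rintro ⟨δ, hδB, hδT, rfl⟩
    refine ⟨δ, hδB, ?_⟩
    rw [Finsupp.sum]
    apply Finset.sum_subset
    · intro t ht
      have ht' : δ t ≠ 0 := Finsupp.mem_support_iff.mp ht
      exact mem_TTf' hu hv (hδT t ht')
    · intro t _ ht
      have : δ t = 0 := by
        by_contra hne
        exact ht (Finsupp.mem_support_iff.mpr hne)
      simp [this]
  · rintro ⟨D, hD, rfl⟩
    classical
    refine ⟨Finsupp.onFinset (TTf u v h) (fun t => if t ∈ TTf u v h then D t else 0)
      (by intro t ht; by_contra hc; simp [hc] at ht), ?_, ?_, ?_⟩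
    · intro t
      simp only [Finsupp.onFinset_apply]
      split
      · exact hD t
      · omega
    · intro t ht
      simp only [Finsupp.onFinset_apply] at ht
      by_cases hc : t ∈ TTf u v h
      · exact (mem_TTf.mp hc).2
      · simp [hc] at ht
    · rw [Finsupp.sum]
      rw [Finset.sum_subset (Finsupp.support_onFinset_subset)]
      · apply Finset.sum_congr rfl
        intro t ht
        simp [ht]
      · intro t _ ht
        have : (Finsupp.onFinset (TTf u v h) (fun t => if t ∈ TTf u v h then D t else 0)
            (by intro t ht; by_contra hc; simp [hc] at ht)) t = 0 := by
          by_contra hne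
          exact ht (Finsupp.mem_support_iff.mpr hne)
        rw [this]
        ring

lemma Aset_lt (hB : 2 ≤ B) (hu : ∀ g < h, 1 ≤ u g) (hv : ∀ g < h, 1 ≤ v g) {a : ℕ}
    (ha : a ∈ Aset B (Tset u v h)) : a < B ^ (Uprod u h * Uprod v h) := by
  obtain ⟨D, hD, rfl⟩ := (mem_Aset_iff hB hu hv).mp ha
  classical
  have e1 : ∑ t ∈ Finset.range (Uprod u h * Uprod v h),
      (if t ∈ TTf u v h then D t else 0) * B^t = ∑ t ∈ TTf u v h, D t * B^t := by
    have e2 : ∀ t, (if t ∈ TTf u v h then D t else 0) * B^t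
        = (if t ∈ TTf u v h then D t * B^t else 0) := by
      intro t; split <;> simp
    rw [Finset.sum_congr rfl (fun t _ => e2 t), Finset.sum_ite_mem,
      Finset.inter_eq_right.mpr (fun t ht => Finset.mem_range.mpr (mem_TTf.mp ht).1)]
  rw [← e1]
  have := mr_lt (fun _ => B) (fun t => if t ∈ TTf u v h then D t else 0)
    (Uprod u h * Uprod v h) (fun k _ => by
      show (if k ∈ TTf u v h then D k else 0) < B
      split
      exacts [hD k, by omega])
  rw [up_const] at this
  calc ∑ t ∈ Finset.range (Uprod u h * Uprod v h), (if t ∈ TTf u v h then D t else 0) * B^t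
      = ∑ t ∈ Finset.range (Uprod u h * Uprod v h),
          (if t ∈ TTf u v h then D t else 0) * Uprod (fun _ => B) t := by
        exact Finset.sum_congr rfl (fun t _ => by rw [up_const])
    _ < B ^ (Uprod u h * Uprod v h) := this

lemma zero_mem_Aset (hB : 1 ≤ B) : (0:ℕ) ∈ Aset B (Tset u v h) :=
  ⟨0, fun t => by simpa using Nat.lt_of_lt_of_le Nat.zero_lt_one hB, fun t ht => by simp at ht, by simp⟩

lemma pow_mem_Aset (hB : 2 ≤ B) (hu : ∀ g < h, 1 ≤ u g) (hv : ∀ g < h, 1 ≤ v g) {t : ℕ}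
    (ht : t ∈ Tset u v h) : B^t ∈ Aset B (Tset u v h) := by
  classical
  rw [mem_Aset_iff hB hu hv]
  refine ⟨fun t' => if t' = t then 1 else 0, fun t' => by
    show (if t' = t then 1 else 0) < B
    split <;> omega, ?_⟩
  symm
  calc ∑ t1 ∈ TTf u v h, (if t1 = t then 1 else 0) * B^t1
      = ∑ t1 ∈ TTf u v h, (if t1 = t then 1*B^t1 else 0) := by
        apply Finset.sum_congr rfl
        intro t1 _
        split <;> simp
    _ = if t ∈ TTf u v h then 1*B^t else 0 := Finset.sum_ite_eq' (TTf u v h) t (fun t1 => 1*B^t1)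
    _ = B^t := by rw [if_pos (mem_TTf' hu hv ht), one_mul]

lemma one_mem_Aset (hB : 2 ≤ B) (hu : ∀ g < h, 1 ≤ u g) (hv : ∀ g < h, 1 ≤ v g) :
    1 ∈ Aset B (Tset u v h) := by
  have := pow_mem_Aset (hB := hB) hu hv (zero_mem_T hv)
  simpa using this

end Struct2


section Blocks

variable {u v : ℕ → ℕ} {h uu : ℕ}

lemma add_lt {s t : ℕ} (hs : s ∈ Sset (Function.update u h (uu+1)) v (h+1))
    (ht : t ∈ Tset u v h) : s + t < (uu+1) * (Uprod u h * Uprod v h) := by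
  obtain ⟨i, hi, rfl⟩ := hs
  obtain ⟨j, hj, rfl⟩ := ht
  rw [key_sum (uu+1) i j]
  have e2 : (uu+1) * (Uprod u h * Uprod v h) = Uprod (bb u v h (uu+1)) (2*h+1) := by
    rw [up_succ, bb_top, wb_even u v h (uu+1) h le_rfl]
    ring
  rw [e2]
  exact mr_lt _ _ _ (ilv_bound (uu+1) hi hj)

end Blocks

open scoped Classical in
/-- chooses the (s,t) decomposition of a position p -/
noncomputable def sig (u v : ℕ → ℕ) (h uu p : ℕ) : ℕ × ℕ :=
  if hp : ∃ s ∈ Sset (Function.update u h (uu+1)) v (h+1), ∃ t ∈ Tset u v h, p = s + t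
  then (hp.choose, hp.choose_spec.2.choose) else (0,0)

section Blocks2

variable {u v : ℕ → ℕ} {h uu : ℕ}

lemma sig_spec {p : ℕ}
    (hp : ∃ s ∈ Sset (Function.update u h (uu+1)) v (h+1), ∃ t ∈ Tset u v h, p = s + t) :
    (sig u v h uu p).1 ∈ Sset (Function.update u h (uu+1)) v (h+1)
      ∧ (sig u v h uu p).2 ∈ Tset u v h ∧ p = (sig u v h uu p).1 + (sig u v h uu p).2 := by
  rw [sig, dif_pos hp]
  exact ⟨hp.choose_spec.1, hp.choose_spec.2.choose_spec.1, hp.choose_spec.2.choose_spec.2⟩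

lemma sig_add {s t : ℕ} (hs : s ∈ Sset (Function.update u h (uu+1)) v (h+1))
    (ht : t ∈ Tset u v h) : sig u v h uu (s+t) = (s, t) := by
  have hp : ∃ s' ∈ Sset (Function.update u h (uu+1)) v (h+1), ∃ t' ∈ Tset u v h, s+t = s' + t' :=
    ⟨s, hs, t, ht, rfl⟩
  obtain ⟨h1, h2, h3⟩ := sig_spec (uu := uu) hp
  obtain ⟨e1, e2⟩ := add_inj h1 hs h2 ht h3.symm
  exact Prod.ext e1 e2

/-- The fundamental reindexing: summing over blocks (s,t) equals summing over positions. -/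
lemma sum_blocks (hu : ∀ g < h, 1 ≤ u g) (hv : ∀ g < h, 1 ≤ v g) (F : ℕ → ℕ → ℕ) :
    ∑ s ∈ SSf u v h uu, ∑ t ∈ TTf u v h, F s t
      = ∑ p ∈ Finset.range ((uu+1) * (Uprod u h * Uprod v h)),
          F (sig u v h uu p).1 (sig u v h uu p).2 := by
  rw [← Finset.sum_product']
  apply Finset.sum_nbij' (i := fun st => st.1 + st.2) (j := fun p => sig u v h uu p)
  · rintro ⟨s, t⟩ hst
    have hs := (mem_SSf.mp (Finset.mem_product.mp hst).1).2
    have ht := (mem_TTf.mp (Finset.mem_product.mp hst).2).2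
    exact Finset.mem_range.mpr (add_lt hs ht)
  · intro p hp
    have hp' : p < (uu+1) * (Uprod u h * Uprod v h) := Finset.mem_range.mp hp
    obtain ⟨s, hs, t, ht, rfl⟩ := add_surj hp'
    rw [sig_add hs ht]
    exact Finset.mem_product.mpr ⟨mem_SSf' hu hv hs, mem_TTf' hu hv ht⟩
  · rintro ⟨s, t⟩ hst
    have hs := (mem_SSf.mp (Finset.mem_product.mp hst).1).2
    have ht := (mem_TTf.mp (Finset.mem_product.mp hst).2).2
    exact sig_add hs ht
  · intro p hp
    have hp' : p < (uu+1) * (Uprod u h * Uprod v h) := Finset.mem_range.mp hp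
    obtain ⟨s, hs, t, ht, rfl⟩ := add_surj hp'
    rw [sig_add hs ht]
  · rintro ⟨s, t⟩ hst
    have hs := (mem_SSf.mp (Finset.mem_product.mp hst).1).2
    have ht := (mem_TTf.mp (Finset.mem_product.mp hst).2).2
    rw [sig_add hs ht]

variable {B : ℕ}

/-- Expand a family of Aset-blocks into base-B positions. -/
lemma expand (hB : 2 ≤ B) (hu : ∀ g < h, 1 ≤ u g) (hv : ∀ g < h, 1 ≤ v g)
    (c : ℕ → ℕ) (hc : ∀ s ∈ SSf u v h uu, c s ∈ Aset B (Tset u v h)) :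
    ∃ F : ℕ → ℕ → ℕ, (∀ s t, F s t < B) ∧
      (∀ s ∈ SSf u v h uu, c s = ∑ t ∈ TTf u v h, F s t * B^t) ∧
      ∑ s ∈ SSf u v h uu, B^s * c s
        = ∑ p ∈ Finset.range ((uu+1) * (Uprod u h * Uprod v h)),
            F (sig u v h uu p).1 (sig u v h uu p).2 * B^p := by
  classical
  have choice : ∀ s, ∃ D : ℕ → ℕ, (∀ t, D t < B) ∧
      (s ∈ SSf u v h uu → c s = ∑ t ∈ TTf u v h, D t * B^t) := by
    intro s
    by_cases hs : s ∈ SSf u v h uu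
    · obtain ⟨D, hD, hsum⟩ := (mem_Aset_iff hB hu hv).mp (hc s hs)
      exact ⟨D, hD, fun _ => hsum⟩
    · exact ⟨fun _ => 0, fun t => by show (0:ℕ) < B; omega, fun hs' => absurd hs' hs⟩
  choose F hF1 hF2 using choice
  refine ⟨F, hF1, hF2, ?_⟩
  have e1 : ∑ s ∈ SSf u v h uu, B^s * c s
      = ∑ s ∈ SSf u v h uu, ∑ t ∈ TTf u v h, F s t * B^(s+t) := by
    apply Finset.sum_congr rfl
    intro s hs
    rw [hF2 s hs, Finset.mul_sum]
    apply Finset.sum_congr rfl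
    intro t _
    rw [pow_add]
    ring
  rw [e1, sum_blocks hu hv (fun s t => F s t * B^(s+t))]
  apply Finset.sum_congr rfl
  intro p hp
  have hp' : p < (uu+1) * (Uprod u h * Uprod v h) := Finset.mem_range.mp hp
  obtain ⟨s, hs, t, ht, rfl⟩ := add_surj hp'
  rw [sig_add hs ht]

lemma blocks_lt (hB : 2 ≤ B) (hu : ∀ g < h, 1 ≤ u g) (hv : ∀ g < h, 1 ≤ v g)
    (c : ℕ → ℕ) (hc : ∀ s ∈ SSf u v h uu, c s ∈ Aset B (Tset u v h)) :
    ∑ s ∈ SSf u v h uu, B^s * c s < B ^ ((uu+1) * (Uprod u h * Uprod v h)) := by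
  obtain ⟨F, hF1, _, e⟩ := expand hB hu hv c hc
  rw [e]
  have := mr_lt (fun _ => B) (fun p => F (sig u v h uu p).1 (sig u v h uu p).2)
    ((uu+1) * (Uprod u h * Uprod v h)) (fun k _ => hF1 _ _)
  rw [up_const] at this
  calc ∑ p ∈ Finset.range ((uu+1) * (Uprod u h * Uprod v h)),
        F (sig u v h uu p).1 (sig u v h uu p).2 * B^p
      = ∑ p ∈ Finset.range ((uu+1) * (Uprod u h * Uprod v h)),
        F (sig u v h uu p).1 (sig u v h uu p).2 * Uprod (fun _ => B) p :=
        Finset.sum_congr rfl (fun p _ => by rw [up_const])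
    _ < _ := this

lemma blocks_inj (hB : 2 ≤ B) (hu : ∀ g < h, 1 ≤ u g) (hv : ∀ g < h, 1 ≤ v g)
    (c c' : ℕ → ℕ) (hc : ∀ s ∈ SSf u v h uu, c s ∈ Aset B (Tset u v h))
    (hc' : ∀ s ∈ SSf u v h uu, c' s ∈ Aset B (Tset u v h))
    (heq : ∑ s ∈ SSf u v h uu, B^s * c s = ∑ s ∈ SSf u v h uu, B^s * c' s) :
    ∀ s ∈ SSf u v h uu, c s = c' s := by
  obtain ⟨F, hF1, hF2, e⟩ := expand hB hu hv c hc
  obtain ⟨F', hF1', hF2', e'⟩ := expand hB hu hv c' hc'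
  rw [e, e'] at heq
  have heq2 : ∑ p ∈ Finset.range ((uu+1) * (Uprod u h * Uprod v h)),
        F (sig u v h uu p).1 (sig u v h uu p).2 * Uprod (fun _ => B) p
      = ∑ p ∈ Finset.range ((uu+1) * (Uprod u h * Uprod v h)),
        F' (sig u v h uu p).1 (sig u v h uu p).2 * Uprod (fun _ => B) p := by
    calc _ = ∑ p ∈ Finset.range ((uu+1) * (Uprod u h * Uprod v h)),
            F (sig u v h uu p).1 (sig u v h uu p).2 * B^p :=
          Finset.sum_congr rfl (fun p _ => by rw [up_const])
      _ = ∑ p ∈ Finset.range ((uu+1) * (Uprod u h * Uprod v h)),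
            F' (sig u v h uu p).1 (sig u v h uu p).2 * B^p := heq
      _ = _ := Finset.sum_congr rfl (fun p _ => by rw [up_const])
  have hdig := mr_inj (fun _ => B) _ _ _ (fun k _ => hF1 _ _) (fun k _ => hF1' _ _) heq2
  intro s hs
  rw [hF2 s hs, hF2' s hs]
  apply Finset.sum_congr rfl
  intro t ht
  have hsS := (mem_SSf.mp hs).2
  have htT := (mem_TTf.mp ht).2
  have hlt : s + t < (uu+1) * (Uprod u h * Uprod v h) := add_lt hsS htT
  have := hdig (s+t) hlt
  rw [sig_add hsS htT] at this
  rw [this]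

lemma blocks_can (hB : 2 ≤ B) (hu : ∀ g < h, 1 ≤ u g) (hv : ∀ g < h, 1 ≤ v g)
    {n : ℕ} (hn : n < B ^ ((uu+1) * (Uprod u h * Uprod v h))) :
    ∃ c : ℕ → ℕ, (∀ s ∈ SSf u v h uu, c s ∈ Aset B (Tset u v h)) ∧
      n = ∑ s ∈ SSf u v h uu, B^s * c s := by
  classical
  have hn' : n < Uprod (fun _ => B) ((uu+1) * (Uprod u h * Uprod v h)) := by
    rwa [up_const]
  obtain ⟨D, hD, rfl⟩ := mr_exists _ _ _ hn'
  set Me := (uu+1) * (Uprod u h * Uprod v h) with hMe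
  refine ⟨fun s => ∑ t ∈ TTf u v h, D (s+t) * B^t, ?_, ?_⟩
  · intro s hs
    rw [mem_Aset_iff hB hu hv]
    refine ⟨fun t => if t ∈ TTf u v h then D (s+t) else 0, ?_, ?_⟩
    · intro t
      show (if t ∈ TTf u v h then D (s+t) else 0) < B
      split
      · refine hD _ ?_
        exact add_lt (mem_SSf.mp hs).2 (mem_TTf.mp (by assumption)).2
      · omega
    · apply Finset.sum_congr rfl
      intro t ht
      show D (s+t) * B^t = (if t ∈ TTf u v h then D (s+t) else 0) * B^t
      rw [if_pos ht]
  · have e1 : ∑ s ∈ SSf u v h uu, B^s * ∑ t ∈ TTf u v h, D (s+t) * B^t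
        = ∑ s ∈ SSf u v h uu, ∑ t ∈ TTf u v h, D (s+t) * B^(s+t) := by
      apply Finset.sum_congr rfl
      intro s _
      rw [Finset.mul_sum]
      apply Finset.sum_congr rfl
      intro t _
      rw [pow_add]
      ring
    rw [e1, sum_blocks hu hv (fun s t => D (s+t) * B^(s+t))]
    apply Finset.sum_congr rfl
    intro p hp
    have hp' : p < Me := Finset.mem_range.mp hp
    obtain ⟨s, hs, t, ht, hpst⟩ := add_surj hp'
    rw [hpst, sig_add hs ht]
    congr 1
    rw [up_const]

end Blocks2

end Stmt6Aux

theorem stmt6 (lam : ℕ) (hlam : 2 ≤ lam) (A : Set ℕ) (hA : A ≠ Set.univ)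
    (m : ℕ) (lamt : Fin m → ℕ) (hpos : ∀ i, 1 ≤ lamt i) (hmono : StrictMono lamt)
    (hR : ∀ n : ℕ, R A lamt n = 1)
    (u v : ℕ → ℕ) (h : ℕ) (hh : 1 ≤ h)
    (hu : ∀ g < h, 2 ≤ u g) (hv : ∀ g < h, 2 ≤ v g)
    (uu : ℕ) (huu : 1 ≤ uu)
    (hΛ : Set.range lamt ∩ Set.Iio (lam ^ (uu * (Uprod u h * Uprod v h)))
        = (fun s => lam ^ s) '' Sset (Function.update u h uu) v (h + 1))
    (hAeq : A ∩ Set.Iio (lam ^ (uu * (Uprod u h * Uprod v h)))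
        = Aset lam (Tset u v h))
    (hmem : lam ^ (uu * (Uprod u h * Uprod v h)) ∈ Set.range lamt)
    (hnmem : lam ^ (uu * (Uprod u h * Uprod v h)) ∉ A) :
    Set.range lamt ∩ Set.Iio (lam ^ ((uu + 1) * (Uprod u h * Uprod v h)))
        = (fun s => lam ^ s) '' Sset (Function.update u h (uu + 1)) v (h + 1) ∧
    A ∩ Set.Iio (lam ^ ((uu + 1) * (Uprod u h * Uprod v h)))
        = Aset lam (Tset u v h) ∧
    lam ^ ((uu + 1) * (Uprod u h * Uprod v h)) ∈ A ∪ Set.range lamt ∧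
    lam ^ ((uu + 1) * (Uprod u h * Uprod v h)) ∉ A ∩ Set.range lamt := by
  classical
  open Stmt6Aux in
  -- basic abbreviations and facts
  have hu1 : ∀ g < h, 1 ≤ u g := fun g hg => by have := hu g hg; omega
  have hv1 : ∀ g < h, 1 ≤ v g := fun g hg => by have := hv g hg; omega
  have hB1 : 1 < lam := by omega
  have hWpos : 0 < Uprod u h * Uprod v h :=
    Nat.mul_pos (up_pos u h hu1) (up_pos v h hv1)
  have hNMe : uu * (Uprod u h * Uprod v h) < (uu + 1) * (Uprod u h * Uprod v h) := by
    have hh1 : (uu+1) * (Uprod u h * Uprod v h)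
        = uu * (Uprod u h * Uprod v h) + (Uprod u h * Uprod v h) := by ring
    omega
  have powinj : ∀ {s s' : ℕ}, lam ^ s = lam ^ s' → s = s' :=
    fun hss => Nat.pow_right_injective hlam hss
  have powlt : ∀ {s s' : ℕ}, s < s' → lam ^ s < lam ^ s' :=
    fun hss => Nat.pow_lt_pow_right hB1 hss
  have powle : ∀ {s s' : ℕ}, s ≤ s' → lam ^ s ≤ lam ^ s' :=
    fun hss => Nat.pow_le_pow_right (by omega) hss
  have powpos : ∀ s : ℕ, 0 < lam ^ s := fun s => Nat.pow_pos (by omega)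
  -- representation function facts
  have hrep : ∀ n : ℕ, ∃ x : Fin m → ℕ, ((∀ i, x i ∈ A) ∧ ∑ i, lamt i * x i = n) ∧
      ∀ y : Fin m → ℕ, (∀ i, y i ∈ A) → ∑ i, lamt i * y i = n → y = x := by
    intro n
    have h1 := hR n
    rw [R, Set.ncard_eq_one] at h1
    obtain ⟨x, hx⟩ := h1
    have hxm : x ∈ {a : Fin m → ℕ | (∀ i, a i ∈ A) ∧ ∑ i, lamt i * a i = n} := by
      rw [hx]; rfl
    exact ⟨x, hxm, fun y hy1 hy2 => by
      have hym : y ∈ {a : Fin m → ℕ | (∀ i, a i ∈ A) ∧ ∑ i, lamt i * a i = n} := ⟨hy1, hy2⟩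
      rw [hx] at hym
      exact hym⟩
  have huniq : ∀ (n : ℕ) (y z : Fin m → ℕ), (∀ i, y i ∈ A) → ∑ i, lamt i * y i = n →
      (∀ i, z i ∈ A) → ∑ i, lamt i * z i = n → y = z := by
    intro n y z hy1 hy2 hz1 hz2
    obtain ⟨x, _, hx⟩ := hrep n
    rw [hx y hy1 hy2, hx z hz1 hz2]
  -- single-coordinate tuples
  have hsing_sum : ∀ (i₀ : Fin m) (x : ℕ),
      ∑ i, lamt i * (if i = i₀ then x else 0) = lamt i₀ * x := by
    intro i₀ x
    rw [Finset.sum_eq_single i₀]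
    · rw [if_pos rfl]
    · intro i _ hi
      rw [if_neg hi, Nat.mul_zero]
    · intro hmem'
      exact absurd (Finset.mem_univ i₀) hmem'
  -- membership basics
  have hATsubA : ∀ x ∈ Aset lam (Tset u v h), x ∈ A := by
    intro x hx
    have : x ∈ A ∩ Set.Iio (lam ^ (uu * (Uprod u h * Uprod v h))) := by
      rw [hAeq]; exact hx
    exact this.1
  have hzeroA : (0:ℕ) ∈ A := hATsubA 0 (zero_mem_Aset (by omega))
  have honeAT : (1:ℕ) ∈ Aset lam (Tset u v h) := one_mem_Aset hlam hu1 hv1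
  have honeA : (1:ℕ) ∈ A := hATsubA 1 honeAT
  have hAsmall : ∀ x ∈ A, x < lam ^ (uu * (Uprod u h * Uprod v h)) →
      x ∈ Aset lam (Tset u v h) := by
    intro x hx hxlt
    have : x ∈ A ∩ Set.Iio (lam ^ (uu * (Uprod u h * Uprod v h))) := ⟨hx, hxlt⟩
    rwa [hAeq] at this
  have hpowSΛ : ∀ s ∈ Sset (Function.update u h uu) v (h+1), lam ^ s ∈ Set.range lamt := by
    intro s hs
    have : lam ^ s ∈ (fun s => lam ^ s) '' Sset (Function.update u h uu) v (h+1) := ⟨s, hs, rfl⟩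
    rw [← hΛ] at this
    exact this.1
  have hΛsmall : ∀ x ∈ Set.range lamt, x < lam ^ (uu * (Uprod u h * Uprod v h)) →
      ∃ s ∈ Sset (Function.update u h uu) v (h+1), x = lam ^ s := by
    intro x hx hxlt
    have : x ∈ Set.range lamt ∩ Set.Iio (lam ^ (uu * (Uprod u h * Uprod v h))) := ⟨hx, hxlt⟩
    rw [hΛ] at this
    obtain ⟨s, hs, hxs⟩ := this
    exact ⟨s, hs, hxs.symm⟩
  -- structural membership facts
  have hS'S : ∀ s ∈ Sset (Function.update u h uu) v (h+1),
      s ∈ Sset (Function.update u h (uu+1)) v (h+1) := by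
    intro s hs
    obtain ⟨d, hd, k, hk, rfl⟩ := mem_S_top.mp hs
    exact mem_S_top.mpr ⟨d, hd, k, by omega, rfl⟩
  have hS'lt : ∀ s ∈ Sset (Function.update u h uu) v (h+1),
      s < uu * (Uprod u h * Uprod v h) :=
    fun s hs => S_top_lt huu hu1 hv1 hs
  have hS0S' : ∀ d ∈ Sset u v h, d ∈ Sset (Function.update u h uu) v (h+1) := by
    intro d hd
    exact mem_S_top.mpr ⟨d, hd, 0, by omega, by ring⟩
  have hNdSS : ∀ d ∈ Sset u v h, uu * (Uprod u h * Uprod v h) + d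
      ∈ Sset (Function.update u h (uu+1)) v (h+1) := by
    intro d hd
    exact mem_S_top.mpr ⟨d, hd, uu, by omega, by ring⟩
  have hSSsplit : ∀ s ∈ Sset (Function.update u h (uu+1)) v (h+1),
      s ∈ Sset (Function.update u h uu) v (h+1) ∨
      ∃ d ∈ Sset u v h, s = uu * (Uprod u h * Uprod v h) + d := by
    intro s hs
    obtain ⟨d, hd, k, hk, rfl⟩ := mem_S_top.mp hs
    by_cases hkuu : k < uu
    · exact Or.inl (mem_S_top.mpr ⟨d, hd, k, hkuu, rfl⟩)
    · have : k = uu := by omega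
      subst this
      exact Or.inr ⟨d, hd, by ring⟩
  -- the key collision lemma : no new powers in A
  have hnotA_pow : ∀ d ∈ Sset u v h, d ≠ 0 →
      lam ^ (uu * (Uprod u h * Uprod v h) + d) ∉ A := by
    intro d hd hd0 hcon
    obtain ⟨s₀, hs₀, t₀, ht₀, ht₀0, hdst⟩ := sbuddy hu hv hd hd0
    obtain ⟨i1, hi1⟩ := hpowSΛ s₀ (hS0S' s₀ hs₀)
    obtain ⟨i2, hi2⟩ := hmem
    have hi12 : i1 ≠ i2 := by
      intro hEq
      rw [hEq, hi2] at hi1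
      have := powinj hi1
      have hs₀lt := S0_lt hu1 hv1 hs₀
      have : Uprod u h * Uprod v h ≤ uu * (Uprod u h * Uprod v h) :=
        Nat.le_mul_of_pos_left _ (by omega)
      omega
    -- two representations of lam ^ (uu*W + t₀)
    have hsum1 : ∑ i, lamt i * (if i = i1 then lam ^ (uu * (Uprod u h * Uprod v h) + d) else 0)
        = lam ^ (uu * (Uprod u h * Uprod v h) + t₀) := by
      rw [hsing_sum, hi1, ← pow_add]
      congr 1
      omega
    have hsum2 : ∑ i, lamt i * (if i = i2 then lam ^ t₀ else 0)
        = lam ^ (uu * (Uprod u h * Uprod v h) + t₀) := by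
      rw [hsing_sum, hi2, ← pow_add]
    have hmem1 : ∀ i, (if i = i1 then lam ^ (uu * (Uprod u h * Uprod v h) + d) else 0) ∈ A := by
      intro i
      split
      · exact hcon
      · exact hzeroA
    have hmem2 : ∀ i, (if i = i2 then lam ^ t₀ else 0) ∈ A := by
      intro i
      split
      · exact hATsubA _ (pow_mem_Aset hlam hu1 hv1 ht₀)
      · exact hzeroA
    have heq := huniq (lam ^ (uu * (Uprod u h * Uprod v h) + t₀)) _ _ hmem1 hsum1 hmem2 hsum2
    have heval := congrFun heq i2
    rw [if_neg (by omega : ¬ i2 = i1), if_pos rfl] at heval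
    have := powpos t₀
    omega
  -- tuples to blocks
  have t2b : ∀ (n' : ℕ) (a : Fin m → ℕ), (∑ i, lamt i * a i = n') →
      (∀ i, a i ≠ 0 → (a i ∈ Aset lam (Tset u v h) ∧
        ∃ s ∈ Sset (Function.update u h (uu+1)) v (h+1), lamt i = lam ^ s)) →
      ∃ c' : ℕ → ℕ, (∀ s ∈ SSf u v h uu, c' s ∈ Aset lam (Tset u v h)) ∧
        (∀ s, c' s ≠ 0 → ∃ i, lamt i = lam ^ s ∧ a i ≠ 0) ∧
        ∑ s ∈ SSf u v h uu, lam ^ s * c' s = n' := by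
    intro n' a hsum ha
    refine ⟨fun s => ∑ i, (if lamt i = lam ^ s then a i else 0), ?_, ?_, ?_⟩
    · -- values in Aset
      intro s _
      show (∑ i, (if lamt i = lam ^ s then a i else 0)) ∈ Aset lam (Tset u v h)
      by_cases hex : ∃ i, lamt i = lam ^ s ∧ a i ≠ 0
      · obtain ⟨i₀, hi₀, hai₀⟩ := hex
        have : ∑ i, (if lamt i = lam ^ s then a i else 0) = a i₀ := by
          rw [Finset.sum_eq_single i₀]
          · rw [if_pos hi₀]
          · intro i _ hii₀
            rw [if_neg (fun hEq => hii₀ (hmono.injective (by rw [hEq, hi₀])))]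
          · intro hni
            exact absurd (Finset.mem_univ i₀) hni
        rw [this]
        exact (ha i₀ hai₀).1
      · push_neg at hex
        have : ∑ i, (if lamt i = lam ^ s then a i else 0) = 0 := by
          apply Finset.sum_eq_zero
          intro i _
          split
          · exact hex i (by assumption)
          · rfl
        rw [this]
        exact zero_mem_Aset (by omega)
    · -- support characterization
      intro s hcs
      have hcs' : ∑ i, (if lamt i = lam ^ s then a i else 0) ≠ 0 := hcs
      obtain ⟨i, _, hi⟩ := Finset.exists_ne_zero_of_sum_ne_zero hcs' 
      by_cases hcond : lamt i = lam ^ s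
      · refine ⟨i, hcond, ?_⟩
        rw [if_pos hcond] at hi
        exact hi
      · rw [if_neg hcond] at hi
        exact absurd rfl hi
    · -- total sum
      show ∑ s ∈ SSf u v h uu, lam ^ s * ∑ i, (if lamt i = lam ^ s then a i else 0) = n'
      have e1 : ∑ s ∈ SSf u v h uu, lam ^ s * ∑ i, (if lamt i = lam ^ s then a i else 0)
          = ∑ s ∈ SSf u v h uu, ∑ i, (if lamt i = lam ^ s then lamt i * a i else 0) := by
        apply Finset.sum_congr rfl
        intro s _
        rw [Finset.mul_sum]
        apply Finset.sum_congr rfl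
        intro i _
        split
        · rename_i hcond
          rw [hcond]
        · exact Nat.mul_zero _
      rw [e1, Finset.sum_comm, ← hsum]
      apply Finset.sum_congr rfl
      intro i _
      by_cases hai : a i = 0
      · rw [hai, Nat.mul_zero]
        apply Finset.sum_eq_zero
        intro s _
        split
        · simp
        · rfl
      · obtain ⟨hAT, s₁, hs₁SS, hs₁⟩ := ha i hai
        have hs₁f : s₁ ∈ SSf u v h uu := mem_SSf' hu1 hv1 hs₁SS
        rw [Finset.sum_eq_single s₁]
        · rw [if_pos hs₁]
        · intro s hsf hss₁
          rw [if_neg (fun hEq => hss₁ (powinj (by rw [← hEq, hs₁])))]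
        · intro hns₁
          exact absurd hs₁f hns₁
  -- main induction
  have MAIN : ∀ n : ℕ, lam ^ (uu * (Uprod u h * Uprod v h)) < n →
      n < lam ^ ((uu+1) * (Uprod u h * Uprod v h)) →
      (n ∉ A ∧ (n ∈ Set.range lamt ↔
        ∃ d ∈ Sset u v h, d ≠ 0 ∧ n = lam ^ (uu * (Uprod u h * Uprod v h) + d))) := by
    intro n
    induction n using Nat.strong_induction_on with
    | _ n IH =>
    intro hnlow hnhigh
    have F1 : ∀ x ∈ A, x < n → x ∈ Aset lam (Tset u v h) := by
      intro x hx hxn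
      rcases lt_trichotomy x (lam ^ (uu * (Uprod u h * Uprod v h))) with hlt | heq | hgt
      · exact hAsmall x hx hlt
      · exact absurd (heq ▸ hx) hnmem
      · exact absurd hx (IH x hxn hgt (lt_trans hxn hnhigh)).1
    have F3 : ∀ s ∈ Sset (Function.update u h (uu+1)) v (h+1), lam ^ s < n →
        lam ^ s ∈ Set.range lamt := by
      intro s hs hlt
      rcases hSSsplit s hs with hs' | ⟨d, hd, rfl⟩
      · exact hpowSΛ s hs'
      · rcases Nat.eq_zero_or_pos d with rfl | hdpos
        · simpa using hmem
        · have hdW : d < Uprod u h * Uprod v h := S0_lt hu1 hv1 hd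
          have hbound1 : lam ^ (uu * (Uprod u h * Uprod v h))
              < lam ^ (uu * (Uprod u h * Uprod v h) + d) := powlt (by omega)
          have hexp : uu * (Uprod u h * Uprod v h) + d < (uu+1) * (Uprod u h * Uprod v h) := by
            have hh1 : (uu+1) * (Uprod u h * Uprod v h)
                = uu * (Uprod u h * Uprod v h) + (Uprod u h * Uprod v h) := by ring
            omega
          exact (IH _ hlt hbound1 (powlt hexp)).2.mpr ⟨d, hd, by omega, rfl⟩
    have F2 : ∀ x ∈ Set.range lamt, x < n →
        ∃ s ∈ Sset (Function.update u h (uu+1)) v (h+1), x = lam ^ s := by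
      intro x hx hxn
      rcases lt_trichotomy x (lam ^ (uu * (Uprod u h * Uprod v h))) with hlt | heq | hgt
      · obtain ⟨s, hs, hxs⟩ := hΛsmall x hx hlt
        exact ⟨s, hS'S s hs, hxs⟩
      · exact ⟨uu * (Uprod u h * Uprod v h) + 0, hNdSS 0 (zero_mem_S0 hu1),
          by rw [Nat.add_zero]; exact heq⟩
      · obtain ⟨d, hd, hd0, hxd⟩ := (IH x hxn hgt (lt_trans hxn hnhigh)).2.mp hx
        exact ⟨uu * (Uprod u h * Uprod v h) + d, hNdSS d hd, hxd⟩
    obtain ⟨c, hcAT, hcsum⟩ := blocks_can hlam hu1 hv1 hnhigh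
    by_cases hGood : ∃ d ∈ Sset u v h, d ≠ 0 ∧ n = lam ^ (uu * (Uprod u h * Uprod v h) + d)
    · obtain ⟨d, hd, hd0, hnd⟩ := hGood
      have hnA : n ∉ A := hnd ▸ hnotA_pow d hd hd0
      refine ⟨hnA, iff_of_true ?_ ⟨d, hd, hd0, hnd⟩⟩
      by_contra hnΛ
      obtain ⟨a₀, ⟨ha₀A, ha₀sum⟩, _⟩ := hrep n
      have hnpos : 0 < n := lt_trans (powpos _) hnlow
      have hper : ∀ i, a₀ i ≠ 0 → ((a₀ i ∈ Aset lam (Tset u v h) ∧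
          ∃ s ∈ Sset (Function.update u h (uu+1)) v (h+1), lamt i = lam ^ s) ∧ lamt i < n) := by
        intro i hai
        have hterm : lamt i * a₀ i ≤ n := by
          rw [← ha₀sum]
          exact Finset.single_le_sum (f := fun i => lamt i * a₀ i)
            (fun i _ => Nat.zero_le _) (Finset.mem_univ i)
        have h1 : lamt i ≤ n := le_trans (Nat.le_mul_of_pos_right _ (by omega)) hterm
        have h2 : a₀ i ≤ n := by
          have := hpos i
          calc a₀ i ≤ lamt i * a₀ i := Nat.le_mul_of_pos_left _ (by omega)
            _ ≤ n := hterm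
        have h3 : a₀ i < n := by
          rcases lt_or_eq_of_le h2 with hlt | hEq
          · exact hlt
          · exfalso
            exact hnA (hEq ▸ ha₀A i)
        have h5 : lamt i < n := by
          rcases lt_or_eq_of_le h1 with hlt | hEq
          · exact hlt
          · exact absurd (hEq ▸ ⟨i, rfl⟩ : n ∈ Set.range lamt) hnΛ
        have h4 : a₀ i ∈ Aset lam (Tset u v h) := F1 _ (ha₀A i) h3
        obtain ⟨s, hsSS, hxs⟩ := F2 (lamt i) ⟨i, rfl⟩ h5
        exact ⟨⟨h4, s, hsSS, hxs⟩, h5⟩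
      obtain ⟨c', hc'AT, hc'supp, hc'sum⟩ := t2b n a₀ ha₀sum
        (fun i hai => (hper i hai).1)
      have hc'0 : c' (uu * (Uprod u h * Uprod v h) + d) = 0 := by
        by_contra hne
        obtain ⟨i, hi, hai⟩ := hc'supp _ hne
        have hlt := (hper i hai).2
        rw [hi, ← hnd] at hlt
        omega
      have hdSSf : uu * (Uprod u h * Uprod v h) + d ∈ SSf u v h uu :=
        mem_SSf' hu1 hv1 (hNdSS d hd)
      have hcpsum : ∑ s ∈ SSf u v h uu, lam ^ s *
          (if s = uu * (Uprod u h * Uprod v h) + d then 1 else 0) = n := by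
        calc ∑ s ∈ SSf u v h uu, lam ^ s *
            (if s = uu * (Uprod u h * Uprod v h) + d then 1 else 0)
            = ∑ s ∈ SSf u v h uu,
              (if s = uu * (Uprod u h * Uprod v h) + d then lam ^ s * 1 else 0) := by
              apply Finset.sum_congr rfl
              intro s _
              split <;> simp
          _ = if uu * (Uprod u h * Uprod v h) + d ∈ SSf u v h uu
              then lam ^ (uu * (Uprod u h * Uprod v h) + d) * 1 else 0 :=
            Finset.sum_ite_eq' (SSf u v h uu) _ (fun s => lam ^ s * 1)
          _ = n := by rw [if_pos hdSSf, Nat.mul_one, hnd]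
      have hbinj := blocks_inj hlam hu1 hv1 c'
        (fun s => if s = uu * (Uprod u h * Uprod v h) + d then 1 else 0) hc'AT
        (fun s _ => by
          show (if s = uu * (Uprod u h * Uprod v h) + d then 1 else 0) ∈ Aset lam (Tset u v h)
          split
          · exact honeAT
          · exact zero_mem_Aset (by omega))
        (hc'sum.trans hcpsum.symm)
      have h0 := hbinj _ hdSSf
      rw [hc'0] at h0
      simp at h0
    · -- case : n is not a new power
      have hmult : ∀ s ∈ SSf u v h uu, c s ≠ 0 → lam ^ s < n := by
        intro s hsf hcs
        have hsSS := (mem_SSf.mp hsf).2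
        have hle : lam ^ s ≤ n := by
          have hterm : lam ^ s * c s ≤ n := by
            rw [hcsum]
            exact Finset.single_le_sum (f := fun s => lam ^ s * c s)
              (fun s _ => Nat.zero_le _) hsf
          calc lam ^ s ≤ lam ^ s * c s := Nat.le_mul_of_pos_right _ (by omega)
            _ ≤ n := hterm
        rcases lt_or_eq_of_le hle with hlt | hEq
        · exact hlt
        · exfalso
          rcases hSSsplit s hsSS with hs' | ⟨d, hd, rfl⟩
          · have h1 : lam ^ s < lam ^ (uu * (Uprod u h * Uprod v h)) := powlt (hS'lt s hs')
            omega
          · rcases Nat.eq_zero_or_pos d with rfl | hdpos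
            · rw [Nat.add_zero] at hEq
              omega
            · exact hGood ⟨d, hd, by omega, hEq.symm⟩
      have hmultΛ : ∀ s ∈ SSf u v h uu, c s ≠ 0 → lam ^ s ∈ Set.range lamt :=
        fun s hsf hcs => F3 s (mem_SSf.mp hsf).2 (hmult s hsf hcs)
      have hastar_val : ∀ i : Fin m,
          (∑ s ∈ SSf u v h uu, (if lamt i = lam ^ s then c s else 0)) = 0 ∨
          ∃ s ∈ SSf u v h uu, lamt i = lam ^ s ∧
            (∑ s ∈ SSf u v h uu, (if lamt i = lam ^ s then c s else 0)) = c s := by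
        intro i
        by_cases hex : ∃ s ∈ SSf u v h uu, lamt i = lam ^ s
        · obtain ⟨s₁, hs₁f, hs₁⟩ := hex
          right
          refine ⟨s₁, hs₁f, hs₁, ?_⟩
          rw [Finset.sum_eq_single s₁]
          · rw [if_pos hs₁]
          · intro s hsf hss₁
            rw [if_neg (fun hEq => hss₁ (powinj (by rw [← hEq, hs₁])))]
          · intro hn₁
            exact absurd hs₁f hn₁
        · left
          apply Finset.sum_eq_zero
          intro s hsf
          rw [if_neg (fun hEq => hex ⟨s, hsf, hEq⟩)]
      have hastar_A : ∀ i : Fin m,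
          (∑ s ∈ SSf u v h uu, (if lamt i = lam ^ s then c s else 0)) ∈ A := by
        intro i
        rcases hastar_val i with h0 | ⟨s, hsf, _, hcs⟩
        · rw [h0]; exact hzeroA
        · rw [hcs]; exact hATsubA _ (hcAT s hsf)
      have hastar_sum : ∑ i, lamt i *
          (∑ s ∈ SSf u v h uu, (if lamt i = lam ^ s then c s else 0)) = n := by
        calc ∑ i, lamt i * (∑ s ∈ SSf u v h uu, (if lamt i = lam ^ s then c s else 0))
            = ∑ i, ∑ s ∈ SSf u v h uu, (if lamt i = lam ^ s then lam ^ s * c s else 0) := by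
              apply Finset.sum_congr rfl
              intro i _
              rw [Finset.mul_sum]
              apply Finset.sum_congr rfl
              intro s _
              split
              · rename_i hcond
                rw [hcond]
              · exact Nat.mul_zero _
          _ = ∑ s ∈ SSf u v h uu, ∑ i, (if lamt i = lam ^ s then lam ^ s * c s else 0) :=
            Finset.sum_comm
          _ = ∑ s ∈ SSf u v h uu, lam ^ s * c s := by
              apply Finset.sum_congr rfl
              intro s hsf
              by_cases hcs : c s = 0
              · rw [hcs, Nat.mul_zero]
                apply Finset.sum_eq_zero
                intro i _
                split <;> simp
              · obtain ⟨i₀, hi₀⟩ := hmultΛ s hsf hcs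
                rw [Finset.sum_eq_single i₀]
                · rw [if_pos hi₀]
                · intro i _ hii₀
                  rw [if_neg (fun hEq => hii₀ (hmono.injective (by rw [hEq, hi₀])))]
                · intro hn₀
                  exact absurd (Finset.mem_univ i₀) hn₀
          _ = n := hcsum.symm
      constructor
      · -- n ∉ A
        intro hnA
        have h0S' : (0:ℕ) ∈ Sset (Function.update u h uu) v (h+1) :=
          mem_S_top.mpr ⟨0, zero_mem_S0 hu1, 0, by omega, by simp⟩
        obtain ⟨i1, hi1⟩ := hpowSΛ 0 h0S'
        have hsum2 : ∑ i, lamt i * (if i = i1 then n else 0) = n := by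
          rw [hsing_sum, hi1, pow_zero, Nat.one_mul]
        have heq := huniq n _ _ hastar_A hastar_sum
          (fun i => by
            show (if i = i1 then n else 0) ∈ A
            split
            · exact hnA
            · exact hzeroA) hsum2
        have heval : (∑ s ∈ SSf u v h uu, (if lamt i1 = lam ^ s then c s else 0)) = n := by
          have := congrFun heq i1
          simpa using this
        rcases hastar_val i1 with h0 | ⟨s, hsf, _, hcs⟩
        · rw [h0] at heval
          have := powpos (uu * (Uprod u h * Uprod v h))
          omega
        · rw [hcs] at heval
          have hlt1 : c s < lam ^ (Uprod u h * Uprod v h) := Aset_lt hlam hu1 hv1 (hcAT s hsf)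
          have hlt2 : lam ^ (Uprod u h * Uprod v h) ≤ lam ^ (uu * (Uprod u h * Uprod v h)) :=
            powle (Nat.le_mul_of_pos_left _ (by omega))
          omega
      · -- n ∈ Λ ↔ Good : both false
        refine iff_of_false ?_ hGood
        intro hnΛ
        obtain ⟨i2, hi2⟩ := hnΛ
        have hsum2 : ∑ i, lamt i * (if i = i2 then 1 else 0) = n := by
          rw [hsing_sum, Nat.mul_one, hi2]
        have heq := huniq n _ _ hastar_A hastar_sum
          (fun i => by
            show (if i = i2 then 1 else 0) ∈ A
            split
            · exact honeA
            · exact hzeroA) hsum2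
        have heval : (∑ s ∈ SSf u v h uu, (if lamt i2 = lam ^ s then c s else 0)) = 1 := by
          have := congrFun heq i2
          simpa using this
        rcases hastar_val i2 with h0 | ⟨s, hsf, hls, hcs⟩
        · rw [h0] at heval
          omega
        · rw [hcs] at heval
          have hcs0 : c s ≠ 0 := by omega
          have hlt := hmult s hsf hcs0
          rw [← hls, hi2] at hlt
          omega
  -- conclusions
  have h0S' : (0:ℕ) ∈ Sset (Function.update u h uu) v (h+1) :=
    mem_S_top.mpr ⟨0, zero_mem_S0 hu1, 0, by omega, by simp⟩
  have hSSmem : ∀ s ∈ Sset (Function.update u h (uu+1)) v (h+1), lam ^ s ∈ Set.range lamt := by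
    intro s hs
    rcases hSSsplit s hs with hs' | ⟨d, hd, rfl⟩
    · exact hpowSΛ s hs'
    · rcases Nat.eq_zero_or_pos d with rfl | hdpos
      · simpa using hmem
      · have hdW : d < Uprod u h * Uprod v h := S0_lt hu1 hv1 hd
        have hexp : uu * (Uprod u h * Uprod v h) + d < (uu+1) * (Uprod u h * Uprod v h) := by
          have hh1 : (uu+1) * (Uprod u h * Uprod v h)
              = uu * (Uprod u h * Uprod v h) + (Uprod u h * Uprod v h) := by ring
          omega
        exact (MAIN _ (powlt (by omega)) (powlt hexp)).2.mpr ⟨d, hd, by omega, rfl⟩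
  have conclΛ : Set.range lamt ∩ Set.Iio (lam ^ ((uu + 1) * (Uprod u h * Uprod v h)))
      = (fun s => lam ^ s) '' Sset (Function.update u h (uu + 1)) v (h + 1) := by
    ext x
    simp only [Set.mem_inter_iff, Set.mem_Iio, Set.mem_image]
    constructor
    · rintro ⟨hxΛ, hxlt⟩
      rcases lt_trichotomy x (lam ^ (uu * (Uprod u h * Uprod v h))) with hlt | heq | hgt
      · obtain ⟨s, hs, hxs⟩ := hΛsmall x hxΛ hlt
        exact ⟨s, hS'S s hs, hxs.symm⟩
      · refine ⟨uu * (Uprod u h * Uprod v h), ?_, heq.symm⟩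
        have := hNdSS 0 (zero_mem_S0 hu1)
        rwa [Nat.add_zero] at this
      · obtain ⟨d, hd, hd0, hxd⟩ := (MAIN x hgt hxlt).2.mp hxΛ
        exact ⟨uu * (Uprod u h * Uprod v h) + d, hNdSS d hd, hxd.symm⟩
    · rintro ⟨s, hs, rfl⟩
      refine ⟨hSSmem s hs, powlt (S_top_lt (by omega) hu1 hv1 hs)⟩
  have conclA : A ∩ Set.Iio (lam ^ ((uu + 1) * (Uprod u h * Uprod v h)))
      = Aset lam (Tset u v h) := by
    ext x
    simp only [Set.mem_inter_iff, Set.mem_Iio]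
    constructor
    · rintro ⟨hxA, hxlt⟩
      rcases lt_trichotomy x (lam ^ (uu * (Uprod u h * Uprod v h))) with hlt | heq | hgt
      · exact hAsmall x hxA hlt
      · exact absurd (heq ▸ hxA) hnmem
      · exact absurd hxA (MAIN x hgt hxlt).1
    · intro hxAT
      refine ⟨hATsubA _ hxAT, ?_⟩
      have h1 : x < lam ^ (Uprod u h * Uprod v h) := Aset_lt hlam hu1 hv1 hxAT
      have h2 : lam ^ (Uprod u h * Uprod v h) ≤ lam ^ ((uu+1) * (Uprod u h * Uprod v h)) :=
        powle (Nat.le_mul_of_pos_left _ (by omega))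
      omega
  refine ⟨conclΛ, conclA, ?_, ?_⟩
  · -- lam ^ Me ∈ A ∪ Λ
    by_contra hcon
    rw [Set.mem_union] at hcon
    push_neg at hcon
    obtain ⟨hPA, hPΛ⟩ := hcon
    obtain ⟨a₀, ⟨ha₀A, ha₀sum⟩, _⟩ := hrep (lam ^ ((uu + 1) * (Uprod u h * Uprod v h)))
    have hper : ∀ i, a₀ i ≠ 0 → (a₀ i ∈ Aset lam (Tset u v h) ∧
        ∃ s ∈ Sset (Function.update u h (uu+1)) v (h+1), lamt i = lam ^ s) := by
      intro i hai
      have hterm : lamt i * a₀ i ≤ lam ^ ((uu + 1) * (Uprod u h * Uprod v h)) := by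
        rw [← ha₀sum]
        exact Finset.single_le_sum (f := fun i => lamt i * a₀ i)
          (fun i _ => Nat.zero_le _) (Finset.mem_univ i)
      have h1 : lamt i ≤ lam ^ ((uu + 1) * (Uprod u h * Uprod v h)) :=
        le_trans (Nat.le_mul_of_pos_right _ (by omega)) hterm
      have h2 : a₀ i ≤ lam ^ ((uu + 1) * (Uprod u h * Uprod v h)) := by
        have := hpos i
        calc a₀ i ≤ lamt i * a₀ i := Nat.le_mul_of_pos_left _ (by omega)
          _ ≤ _ := hterm
      have h3 : a₀ i < lam ^ ((uu + 1) * (Uprod u h * Uprod v h)) := by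
        rcases lt_or_eq_of_le h2 with hlt | hEq
        · exact hlt
        · exact absurd (hEq ▸ ha₀A i) hPA
      have h5 : lamt i < lam ^ ((uu + 1) * (Uprod u h * Uprod v h)) := by
        rcases lt_or_eq_of_le h1 with hlt | hEq
        · exact hlt
        · exact absurd (hEq ▸ ⟨i, rfl⟩ : lam ^ ((uu + 1) * (Uprod u h * Uprod v h))
            ∈ Set.range lamt) hPΛ
      have h4 : a₀ i ∈ Aset lam (Tset u v h) := by
        have : a₀ i ∈ A ∩ Set.Iio (lam ^ ((uu + 1) * (Uprod u h * Uprod v h))) := ⟨ha₀A i, h3⟩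
        rwa [conclA] at this
      have h6 : lamt i ∈ Set.range lamt ∩ Set.Iio (lam ^ ((uu + 1) * (Uprod u h * Uprod v h))) :=
        ⟨⟨i, rfl⟩, h5⟩
      rw [conclΛ] at h6
      obtain ⟨s, hsSS, hss⟩ := h6
      exact ⟨h4, s, hsSS, hss.symm⟩
    obtain ⟨c', hc'AT, _, hc'sum⟩ := t2b _ a₀ ha₀sum hper
    have := blocks_lt hlam hu1 hv1 c' hc'AT
    omega
  · -- not in both
    rintro ⟨hPA, hPΛ⟩
    obtain ⟨i1, hi1⟩ := hpowSΛ 0 h0S'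
    obtain ⟨iP, hiP⟩ := hPΛ
    rw [pow_zero] at hi1
    have hi1P : i1 ≠ iP := by
      intro hEq
      rw [hEq, hiP] at hi1
      have h2 : 1 ≤ (uu+1) * (Uprod u h * Uprod v h) := by
        have := hWpos
        nlinarith
      have := powle h2
      simp at this
      omega
    have hsum1 : ∑ i, lamt i * (if i = i1 then lam ^ ((uu + 1) * (Uprod u h * Uprod v h))
        else 0) = lam ^ ((uu + 1) * (Uprod u h * Uprod v h)) := by
      rw [hsing_sum, hi1, Nat.one_mul]
    have hsum2 : ∑ i, lamt i * (if i = iP then 1 else 0)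
        = lam ^ ((uu + 1) * (Uprod u h * Uprod v h)) := by
      rw [hsing_sum, Nat.mul_one, hiP]
    have heq := huniq (lam ^ ((uu + 1) * (Uprod u h * Uprod v h))) _ _
      (fun i => by
        show (if i = i1 then lam ^ ((uu + 1) * (Uprod u h * Uprod v h)) else 0) ∈ A
        split
        · exact hPA
        · exact hzeroA) hsum1
      (fun i => by
        show (if i = iP then 1 else 0) ∈ A
        split
        · exact honeA
        · exact hzeroA) hsum2
    have heval := congrFun heq iP
    rw [if_neg (fun hEq => hi1P hEq.symm), if_pos rfl] at heval
    exact absurd heval.symm one_ne_zero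
end

section
/- Let λ ≥ 2 and u₁, v₁, u₂, v₂, …, u_{k−1}, v_{k−1}, u_k ≥ 2 be integers. Let Λ_λ(u₁, v₁, …, u_{k−1}, v_{k−1}, u_k) = {λ₁, …, λ_m} with 1 ≤ λ₁ < ⋯ < λ_m, put λ̄ = (λ₁, …, λ_m), and let A = A_λ(u₁, v₁, …, u_{k−1}, v_{k−1}, u_k, ∞). Then R_{A,λ̄}(n) = 1 for every nonnegative integer n. -/
def Wb (B : ℕ → ℕ) (h : ℕ) : ℕ := ∏ j ∈ Finset.range h, B j

lemma Wb_succ (B : ℕ → ℕ) (h : ℕ) : Wb B (h+1) = Wb B h * B h := Finset.prod_range_succ _ _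

lemma Wb_zero (B : ℕ → ℕ) : Wb B 0 = 1 := Finset.prod_range_zero _

lemma Wb_shift (B : ℕ → ℕ) (h : ℕ) : Wb B (h+1) = Wb (fun j => B (j+1)) h * B 0 :=
  Finset.prod_range_succ' _ _

lemma mr_identity (B : ℕ → ℕ) (K n : ℕ) :
    n = ∑ h ∈ Finset.range K, (n / Wb B h % B h) * Wb B h + (n / Wb B K) * Wb B K := by
  induction K with
  | zero => simp [Wb_zero]
  | succ K ih =>
    have hstep : (n / Wb B K) * Wb B K
        = (n / Wb B K % B K) * Wb B K + (n / Wb B (K+1)) * Wb B (K+1) := by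
      rw [Wb_succ, ← Nat.div_div_eq_div_mul]
      set q := n / Wb B K
      calc q * Wb B K = (q % B K + B K * (q / B K)) * Wb B K := by rw [Nat.mod_add_div]
        _ = q % B K * Wb B K + q / B K * (Wb B K * B K) := by ring
    calc n = ∑ h ∈ Finset.range K, (n / Wb B h % B h) * Wb B h + (n / Wb B K) * Wb B K := ih
      _ = ∑ h ∈ Finset.range K, (n / Wb B h % B h) * Wb B h
          + ((n / Wb B K % B K) * Wb B K + (n / Wb B (K+1)) * Wb B (K+1)) := by rw [hstep]
      _ = _ := by rw [Finset.sum_range_succ, add_assoc]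

lemma mr_unique_s9 : ∀ (K : ℕ) (B c c' : ℕ → ℕ) (q q' : ℕ),
    (∀ h < K, c h < B h) → (∀ h < K, c' h < B h) →
    (∑ h ∈ Finset.range K, c h * Wb B h) + q * Wb B K
      = (∑ h ∈ Finset.range K, c' h * Wb B h) + q' * Wb B K →
    (∀ h < K, c h = c' h) ∧ q = q' := by
  intro K
  induction K with
  | zero => intro B c c' q q' _ _ heq; simpa [Wb_zero] using heq
  | succ K ih =>
    intro B c c' q q' hc hc' heq
    have hB0 : 0 < B 0 := lt_of_le_of_lt (Nat.zero_le _) (hc 0 (Nat.succ_pos _))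
    have hrw : ∀ d : ℕ → ℕ, ∀ r : ℕ,
        (∑ h ∈ Finset.range (K+1), d h * Wb B h) + r * Wb B (K+1)
        = d 0 + B 0 * ((∑ h ∈ Finset.range K, d (h+1) * Wb (fun j => B (j+1)) h)
            + r * Wb (fun j => B (j+1)) K) := by
      intro d r
      rw [Finset.sum_range_succ']
      simp only [Wb_shift, Wb_zero]
      have hsum : ∑ x ∈ Finset.range K, d (x + 1) * (Wb (fun j => B (j + 1)) x * B 0)
          = B 0 * ∑ x ∈ Finset.range K, d (x + 1) * Wb (fun j => B (j + 1)) x := by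
        rw [Finset.mul_sum]; exact Finset.sum_congr rfl (fun x _ => by ring)
      rw [hsum]; ring
    rw [hrw c q, hrw c' q'] at heq
    have h0 : c 0 = c' 0 := by
      have e1 : (c 0 + B 0 * ((∑ h ∈ Finset.range K, c (h+1) * Wb (fun j => B (j+1)) h)
            + q * Wb (fun j => B (j+1)) K)) % B 0 = c 0 := by
        rw [Nat.add_mul_mod_self_left, Nat.mod_eq_of_lt (hc 0 (Nat.succ_pos _))]
      have e2 : (c' 0 + B 0 * ((∑ h ∈ Finset.range K, c' (h+1) * Wb (fun j => B (j+1)) h)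
            + q' * Wb (fun j => B (j+1)) K)) % B 0 = c' 0 := by
        rw [Nat.add_mul_mod_self_left, Nat.mod_eq_of_lt (hc' 0 (Nat.succ_pos _))]
      rw [← e1, ← e2, heq]
    have hrest : (∑ h ∈ Finset.range K, c (h+1) * Wb (fun j => B (j+1)) h)
        + q * Wb (fun j => B (j+1)) K
        = (∑ h ∈ Finset.range K, c' (h+1) * Wb (fun j => B (j+1)) h)
        + q' * Wb (fun j => B (j+1)) K := by
      rw [h0] at heq
      exact Nat.eq_of_mul_eq_mul_left hB0 (Nat.add_left_cancel heq)
    obtain ⟨hdig, hq⟩ := ih (fun j => B (j+1)) (fun h => c (h+1)) (fun h => c' (h+1)) q q'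
      (fun h hh => hc (h+1) (Nat.succ_lt_succ hh))
      (fun h hh => hc' (h+1) (Nat.succ_lt_succ hh)) hrest
    refine ⟨fun h hh => ?_, hq⟩
    cases h with
    | zero => exact h0
    | succ h => exact hdig h (Nat.lt_of_succ_lt_succ hh)

lemma Wb_const (lam : ℕ) (h : ℕ) : Wb (fun _ => lam) h = lam ^ h := by
  simp [Wb]

lemma pow_sum_identity (lam n N : ℕ) (hN : n < lam ^ N) :
    n = ∑ t ∈ Finset.range N, (n / lam ^ t % lam) * lam ^ t := by
  have := mr_identity (fun _ => lam) N n
  simp only [Wb_const] at this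
  rwa [Nat.div_eq_of_lt hN, zero_mul, add_zero] at this

lemma pow_sum_unique (lam N : ℕ) (f g : ℕ → ℕ) (hf : ∀ t, f t < lam) (hg : ∀ t, g t < lam)
    (heq : ∑ t ∈ Finset.range N, f t * lam ^ t = ∑ t ∈ Finset.range N, g t * lam ^ t) :
    ∀ t < N, f t = g t := by
  have h := mr_unique_s9 N (fun _ => lam) f g 0 0 (fun h _ => hf h) (fun h _ => hg h) ?_
  · exact h.1
  · simpa [Wb_const] using heq

/-- combined weight -/
def Wst (u v : ℕ → ℕ) (h : ℕ) : ℕ := Uprod u h * Uprod v h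

lemma Wst_eq_Wb (u v : ℕ → ℕ) (h : ℕ) : Wst u v h = Wb (fun j => u j * v j) h := by
  simp [Wst, Wb, Uprod, Finset.prod_mul_distrib]

lemma USucc (u v : ℕ → ℕ) (h : ℕ) :
    Uprod u (h+1) * Uprod v h = u h * Wst u v h := by
  simp [Uprod, Wst, Finset.prod_range_succ]; ring

/-- digits of w in mixed radix u0 v0 u1 v1 ..., combined digits -/
def cdig (u v : ℕ → ℕ) (k w h : ℕ) : ℕ :=
  if h + 1 = k then w / Wst u v h else w / Wst u v h % (u h * v h)

def sdec (u v : ℕ → ℕ) (k w : ℕ) : ℕ :=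
  ∑ h ∈ Finset.range k, (cdig u v k w h % u h) * Wst u v h

def tdec (u v : ℕ → ℕ) (k w : ℕ) : ℕ :=
  ∑ h ∈ Finset.range k, (cdig u v k w h / u h) * (Uprod u (h + 1) * Uprod v h)

section ST
variable (u v : ℕ → ℕ) (k : ℕ)

lemma sdec_mem (hu : ∀ h < k, 2 ≤ u h) (w : ℕ) : sdec u v k w ∈ Sset u v k := by
  refine ⟨fun h => cdig u v k w h % u h, fun h hh => Nat.mod_lt _ ?_, rfl⟩
  exact lt_of_lt_of_le Nat.zero_lt_two (hu h hh)

lemma tdec_mem (hu : ∀ h < k, 2 ≤ u h) (hv : ∀ h, h + 1 < k → 2 ≤ v h) (w : ℕ) :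
    tdec u v k w ∈ TsetInf u v k := by
  refine ⟨fun h => cdig u v k w h / u h, fun h hh => ?_, rfl⟩
  have hu2 : 0 < u h := lt_of_lt_of_le Nat.zero_lt_two (hu h (Nat.lt_of_succ_lt hh))
  have hv2 : 0 < v h := lt_of_lt_of_le Nat.zero_lt_two (hv h hh)
  have hc : cdig u v k w h < u h * v h := by
    rw [cdig, if_neg (Nat.ne_of_lt hh)]
    exact Nat.mod_lt _ (Nat.mul_pos hu2 hv2)
  rw [Nat.div_lt_iff_lt_mul hu2]
  calc cdig u v k w h < u h * v h := hc
    _ = v h * u h := Nat.mul_comm _ _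

lemma sum_cdig (hk : 1 ≤ k) (w : ℕ) :
    ∑ h ∈ Finset.range k, cdig u v k w h * Wst u v h = w := by
  obtain ⟨K, rfl⟩ : ∃ K, k = K + 1 := ⟨k - 1, (Nat.succ_pred_eq_of_pos hk).symm⟩
  have hid := mr_identity (fun j => u j * v j) K w
  simp only [← Wst_eq_Wb] at hid
  rw [Finset.sum_range_succ]
  have h1 : ∑ h ∈ Finset.range K, cdig u v (K+1) w h * Wst u v h
      = ∑ h ∈ Finset.range K, (w / Wst u v h % (u h * v h)) * Wst u v h := by
    refine Finset.sum_congr rfl (fun h hh => ?_)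
    rw [cdig, if_neg]
    exact fun he => absurd (Nat.succ_injective he) (Nat.ne_of_lt (Finset.mem_range.mp hh))
  have h2 : cdig u v (K+1) w K = w / Wst u v K := by rw [cdig, if_pos rfl]
  rw [h1, h2, ← hid]

lemma sdec_add_tdec (hk : 1 ≤ k) (w : ℕ) : sdec u v k w + tdec u v k w = w := by
  have hterm : ∀ h : ℕ, (cdig u v k w h % u h) * Wst u v h
      + (cdig u v k w h / u h) * (Uprod u (h+1) * Uprod v h)
      = cdig u v k w h * Wst u v h := by
    intro h
    rw [USucc]
    calc (cdig u v k w h % u h) * Wst u v h + cdig u v k w h / u h * (u h * Wst u v h)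
        = (cdig u v k w h % u h + cdig u v k w h / u h * u h) * Wst u v h := by ring
      _ = cdig u v k w h * Wst u v h := by rw [Nat.mod_add_div']
  rw [sdec, tdec, ← Finset.sum_add_distrib]
  rw [Finset.sum_congr rfl (fun h _ => hterm h)]
  exact sum_cdig u v k hk w

lemma st_eq (hk : 1 ≤ k) (hu : ∀ h < k, 2 ≤ u h) (hv : ∀ h, h + 1 < k → 2 ≤ v h)
    {s t : ℕ} (hs : s ∈ Sset u v k) (ht : t ∈ TsetInf u v k) :
    sdec u v k (s + t) = s ∧ tdec u v k (s + t) = t := by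
  obtain ⟨i, hi, rfl⟩ := hs
  obtain ⟨j, hj, rfl⟩ := ht
  obtain ⟨K, rfl⟩ : ∃ K, k = K + 1 := ⟨k - 1, (Nat.succ_pred_eq_of_pos hk).symm⟩
  set k := K + 1 with hkdef
  set s := ∑ h ∈ Finset.range k, i h * (Uprod u h * Uprod v h) with hsdef
  set t := ∑ h ∈ Finset.range k, j h * (Uprod u (h + 1) * Uprod v h) with htdef
  set c' : ℕ → ℕ := fun h => i h + u h * j h with hc'def
  have hw : s + t = ∑ h ∈ Finset.range k, c' h * Wst u v h := by
    rw [hsdef, htdef, ← Finset.sum_add_distrib]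
    refine Finset.sum_congr rfl (fun h _ => ?_)
    rw [USucc, hc'def]
    show i h * (Uprod u h * Uprod v h) + j h * (u h * Wst u v h) = (i h + u h * j h) * Wst u v h
    rw [Wst]; ring
  have hw2 : s + t = ∑ h ∈ Finset.range k, cdig u v k (s + t) h * Wst u v h :=
    (sum_cdig u v k hk (s + t)).symm
  -- apply uniqueness
  have hdigeq : ∀ h < k, c' h = cdig u v k (s + t) h := by
    have hm := mr_unique_s9 K (fun j => u j * v j) c' (cdig u v k (s + t))
      (c' K) (cdig u v k (s + t) K) ?_ ?_ ?_
    · intro h hh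
      rcases Nat.lt_succ_iff_lt_or_eq.mp hh with h1 | rfl
      · exact hm.1 h h1
      · exact hm.2
    · intro h hh
      have hiu := hi h (Nat.lt_succ_of_lt hh)
      have hjv := hj h (Nat.succ_lt_succ hh)
      have h1 : u h * (j h + 1) ≤ u h * v h := Nat.mul_le_mul_left _ (Nat.succ_le_of_lt hjv)
      have h2 : u h * (j h + 1) = u h * j h + u h := by ring
      show i h + u h * j h < u h * v h
      omega
    · intro h hh
      have hu2 : 0 < u h := lt_of_lt_of_le Nat.zero_lt_two (hu h (Nat.lt_succ_of_lt hh))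
      have hv2 : 0 < v h := lt_of_lt_of_le Nat.zero_lt_two (hv h (Nat.succ_lt_succ hh))
      rw [cdig, if_neg (fun he => absurd (Nat.succ_injective he) (Nat.ne_of_lt hh))]
      exact Nat.mod_lt _ (Nat.mul_pos hu2 hv2)
    · simp only [← Wst_eq_Wb]
      rw [← Finset.sum_range_succ (fun h => c' h * Wst u v h) K,
        ← Finset.sum_range_succ (fun h => cdig u v k (s+t) h * Wst u v h) K]
      rw [← hw, ← hw2]
  constructor
  · rw [sdec, hsdef]
    refine Finset.sum_congr rfl (fun h hh => ?_)
    rw [← hdigeq h (Finset.mem_range.mp hh), hc'def]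
    show (i h + u h * j h) % u h * Wst u v h = i h * (Uprod u h * Uprod v h)
    rw [Nat.add_mul_mod_self_left, Nat.mod_eq_of_lt (hi h (Finset.mem_range.mp hh)), Wst]
  · rw [tdec, htdef]
    refine Finset.sum_congr rfl (fun h hh => ?_)
    rw [← hdigeq h (Finset.mem_range.mp hh), hc'def]
    have hu2 : 0 < u h := lt_of_lt_of_le Nat.zero_lt_two (hu h (Finset.mem_range.mp hh))
    show (i h + u h * j h) / u h * (Uprod u (h+1) * Uprod v h) = j h * (Uprod u (h+1) * Uprod v h)
    rw [Nat.add_mul_div_left _ _ hu2, Nat.div_eq_of_lt (hi h (Finset.mem_range.mp hh)), zero_add]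

end ST

theorem stmt9 (lam k : ℕ) (hlam : 2 ≤ lam) (hk : 1 ≤ k) (u v : ℕ → ℕ)
    (hu : ∀ h < k, 2 ≤ u h) (hv : ∀ h, h + 1 < k → 2 ≤ v h)
    (m : ℕ) (lamt : Fin m → ℕ) (hpos : ∀ i, 1 ≤ lamt i) (hmono : StrictMono lamt)
    (hΛ : Set.range lamt = (fun s => lam ^ s) '' Sset u v k)
    (A : Set ℕ) (hA : A = Aset lam (TsetInf u v k)) :
    ∀ n : ℕ, R A lamt n = 1 := by
  classical
  intro n
  have hpowinj : Function.Injective fun s : ℕ => lam ^ s :=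
    fun a b hab => Nat.pow_right_injective hlam hab
  have hσex : ∀ i : Fin m, ∃ s, s ∈ Sset u v k ∧ lam ^ s = lamt i := by
    intro i
    have : lamt i ∈ Set.range lamt := ⟨i, rfl⟩
    rw [hΛ] at this
    obtain ⟨s, hs, he⟩ := this
    exact ⟨s, hs, he⟩
  choose σ hσS hσpow using hσex
  have hσinj : Function.Injective σ := by
    intro i i' h
    apply hmono.injective
    rw [← hσpow i, ← hσpow i', h]
  have hσsurj : ∀ s ∈ Sset u v k, ∃ i, σ i = s := by
    intro s hs
    have : lam ^ s ∈ Set.range lamt := by rw [hΛ]; exact ⟨s, hs, rfl⟩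
    obtain ⟨i, hi⟩ := this
    refine ⟨i, hpowinj ?_⟩
    show lam ^ σ i = lam ^ s
    rw [hσpow i, ← hi]
  have h0S : (0 : ℕ) ∈ Sset u v k := by
    refine ⟨fun _ => 0, fun h hh => lt_of_lt_of_le Nat.zero_lt_two (hu h hh), by simp⟩
  obtain ⟨i₀, _⟩ := hσsurj 0 h0S
  set invσ : ℕ → Fin m := fun s => if h : ∃ i, σ i = s then h.choose else i₀ with hinvdef
  have hinvσ : ∀ s ∈ Sset u v k, σ (invσ s) = s := by
    intro s hs
    obtain h := hσsurj s hs
    rw [hinvdef]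
    simp only [dif_pos h]
    exact h.choose_spec
  have hinvσσ : ∀ i, invσ (σ i) = i := fun i => hσinj (hinvσ _ (hσS i))
  set Smax := Finset.univ.sup σ with hSmax
  have hσle : ∀ i, σ i ≤ Smax := fun i => Finset.le_sup (Finset.mem_univ i)
  set D : ℕ → ℕ := fun w => n / lam ^ w % lam with hDdef
  have hD : ∀ w, D w < lam := fun w => Nat.mod_lt _ (by omega)
  have hpowmono : ∀ N M : ℕ, N ≤ M → lam ^ N ≤ lam ^ M :=
    fun N M h => Nat.pow_le_pow_right (by omega) h
  have hDz : ∀ w, n < lam ^ w → D w = 0 := by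
    intro w hw
    simp only [hDdef, Nat.div_eq_of_lt hw, Nat.zero_mod]
  -- the key reindexing lemma
  have keyG : ∀ (N : ℕ) (δ : Fin m → ℕ → ℕ),
      (∀ i t, δ i t ≠ 0 → t ∈ TsetInf u v k ∧ t < N) →
      ∑ i, lam ^ σ i * ∑ t ∈ Finset.range N, δ i t * lam ^ t
        = ∑ w ∈ Finset.range (N + Smax + 1),
            δ (invσ (sdec u v k w)) (tdec u v k w) * lam ^ w := by
    intro N δ hδ
    have hLHS : ∑ i, lam ^ σ i * ∑ t ∈ Finset.range N, δ i t * lam ^ t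
        = ∑ p ∈ Finset.univ ×ˢ Finset.range N, δ p.1 p.2 * lam ^ (σ p.1 + p.2) := by
      rw [Finset.sum_product]
      refine Finset.sum_congr rfl (fun i _ => ?_)
      rw [Finset.mul_sum]
      exact Finset.sum_congr rfl (fun t _ => by rw [pow_add]; ring)
    rw [hLHS]
    rw [← Finset.sum_filter_of_ne
      (p := fun p : Fin m × ℕ => δ p.1 p.2 ≠ 0)
      (fun p _ hp h0 => hp (by rw [h0, zero_mul]))]
    rw [← Finset.sum_filter_of_ne
      (p := fun w : ℕ => δ (invσ (sdec u v k w)) (tdec u v k w) ≠ 0)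
      (fun w _ hw h0 => hw (by rw [h0, zero_mul]))]
    refine Finset.sum_nbij' (fun p => σ p.1 + p.2)
      (fun w => (invσ (sdec u v k w), tdec u v k w)) ?_ ?_ ?_ ?_ ?_
    · intro p hp
      obtain ⟨hp1, hp2⟩ := Finset.mem_filter.mp hp
      obtain ⟨hT, hN⟩ := hδ p.1 p.2 hp2
      obtain ⟨he1, he2⟩ := st_eq u v k hk hu hv (hσS p.1) hT
      refine Finset.mem_filter.mpr ⟨Finset.mem_range.mpr ?_, ?_⟩
      · show σ p.1 + p.2 < N + Smax + 1
        have h6 := hσle p.1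
        omega
      · show δ (invσ (sdec u v k (σ p.1 + p.2))) (tdec u v k (σ p.1 + p.2)) ≠ 0
        rw [he1, he2, hinvσσ]
        exact hp2
    · intro w hw
      obtain ⟨_, hw2⟩ := Finset.mem_filter.mp hw
      refine Finset.mem_filter.mpr ⟨Finset.mem_mk.mpr ?_, hw2⟩
      · exact Finset.mem_product.mpr ⟨Finset.mem_univ _,
          Finset.mem_range.mpr (hδ _ _ hw2).2⟩
    · intro p hp
      obtain ⟨hp1, hp2⟩ := Finset.mem_filter.mp hp
      obtain ⟨hT, hN⟩ := hδ p.1 p.2 hp2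
      obtain ⟨he1, he2⟩ := st_eq u v k hk hu hv (hσS p.1) hT
      show (invσ (sdec u v k (σ p.1 + p.2)), tdec u v k (σ p.1 + p.2)) = p
      rw [he1, he2, hinvσσ]
    · intro w hw
      show σ (invσ (sdec u v k w)) + tdec u v k w = w
      rw [hinvσ _ (sdec_mem u v k hu w)]
      exact sdec_add_tdec u v k hk w
    · intro p hp
      obtain ⟨hp1, hp2⟩ := Finset.mem_filter.mp hp
      obtain ⟨hT, hN⟩ := hδ p.1 p.2 hp2
      obtain ⟨he1, he2⟩ := st_eq u v k hk hu hv (hσS p.1) hT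
      show δ p.1 p.2 * lam ^ (σ p.1 + p.2)
          = δ (invσ (sdec u v k (σ p.1 + p.2))) (tdec u v k (σ p.1 + p.2))
            * lam ^ (σ p.1 + p.2)
      rw [he1, he2, hinvσσ]
  -- canonical representation
  set N₀ := n + 1 with hN₀def
  have hN₀lt : n < lam ^ N₀ := by
    calc n < 2 ^ n := Nat.lt_two_pow_self
      _ ≤ 2 ^ N₀ := Nat.pow_le_pow_right (by omega) (by omega)
      _ ≤ lam ^ N₀ := Nat.pow_le_pow_left hlam _
  set δs : Fin m → ℕ → ℕ :=
    fun i t => if t ∈ TsetInf u v k ∧ t < N₀ then D (σ i + t) else 0 with hδsdef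
  set astar : Fin m → ℕ := fun i => ∑ t ∈ Finset.range N₀, δs i t * lam ^ t with hastardef
  have hδs_lt : ∀ i t, δs i t < lam := by
    intro i t
    simp only [hδsdef]
    split
    · exact hD _
    · omega
  have hδs_supp : ∀ i t, δs i t ≠ 0 → t ∈ TsetInf u v k ∧ t < N₀ := by
    intro i t h
    by_cases hc : t ∈ TsetInf u v k ∧ t < N₀
    · exact hc
    · exfalso; apply h; simp only [hδsdef, if_neg hc]
  have hmemA : ∀ i, astar i ∈ A := by
    intro i
    rw [hA]
    refine ⟨Finsupp.onFinset (Finset.range N₀) (δs i)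
      (fun t ht => Finset.mem_range.mpr (hδs_supp i t ht).2), ?_, ?_, ?_⟩
    · intro t; exact hδs_lt i t
    · intro t ht; exact (hδs_supp i t ht).1
    · rw [Finsupp.sum]
      simp only [Finsupp.onFinset_apply]
      refine (Finset.sum_subset Finsupp.support_onFinset_subset ?_).symm
      intro t _ ht
      have : δs i t = 0 := by
        have := Finsupp.notMem_support_iff.mp ht
        simpa using this
      rw [this, zero_mul]
  have hsum : ∑ i, lamt i * astar i = n := by
    have h1 : ∑ i, lamt i * astar i = ∑ i, lam ^ σ i * astar i :=
      Finset.sum_congr rfl fun i _ => by rw [hσpow]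
    rw [h1, hastardef]
    rw [keyG N₀ δs hδs_supp]
    have h2 : ∀ w ∈ Finset.range (N₀ + Smax + 1),
        δs (invσ (sdec u v k w)) (tdec u v k w) * lam ^ w = D w * lam ^ w := by
      intro w hw
      have hts := tdec_mem u v k hu hv w
      have hadd := sdec_add_tdec u v k hk w
      simp only [hδsdef]
      by_cases hc : tdec u v k w < N₀
      · rw [if_pos ⟨hts, hc⟩, hinvσ _ (sdec_mem u v k hu w), hadd]
      · rw [if_neg (fun hx => hc hx.2)]
        have hDw : D w = 0 := by
          refine hDz w (lt_of_lt_of_le hN₀lt (hpowmono N₀ w ?_))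
          omega
        rw [hDw]
    rw [Finset.sum_congr rfl h2]
    exact (pow_sum_identity lam n _ (lt_of_lt_of_le hN₀lt (hpowmono N₀ _ (by omega)))).symm
  -- uniqueness
  have huniq : ∀ a : Fin m → ℕ, (∀ i, a i ∈ A) → ∑ i, lamt i * a i = n → a = astar := by
    intro a hmem hsum'
    have hmem' : ∀ i, ∃ δ : ℕ →₀ ℕ, (∀ t, δ t < lam) ∧
        (∀ t, δ t ≠ 0 → t ∈ TsetInf u v k) ∧ a i = δ.sum fun t d => d * lam ^ t := by
      intro i
      have := hmem i
      rw [hA] at this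
      exact this
    choose δ' h1 h2 h3 using hmem'
    set N := N₀ + 1 + Finset.univ.sup (fun i => (δ' i).support.sup id) with hNdef
    have hNsupp : ∀ i t, δ' i t ≠ 0 → t < N := by
      intro i t ht
      have hts : t ∈ (δ' i).support := Finsupp.mem_support_iff.mpr ht
      have h4 : t ≤ (δ' i).support.sup id := Finset.le_sup (f := id) hts
      have h5 : (δ' i).support.sup id ≤ Finset.univ.sup (fun i => (δ' i).support.sup id) :=
        Finset.le_sup (f := fun i => (δ' i).support.sup id) (Finset.mem_univ i)
      omega
    have hai : ∀ i, a i = ∑ t ∈ Finset.range N, δ' i t * lam ^ t := by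
      intro i
      rw [h3 i, Finsupp.sum]
      refine Finset.sum_subset
        (fun t ht => Finset.mem_range.mpr (hNsupp i t (Finsupp.mem_support_iff.mp ht))) ?_
      intro t _ ht
      rw [Finsupp.notMem_support_iff.mp ht, zero_mul]
    have hcond : ∀ i t, (fun i t => δ' i t) i t ≠ 0 → t ∈ TsetInf u v k ∧ t < N :=
      fun i t ht => ⟨h2 i t ht, hNsupp i t ht⟩
    have hG := keyG N (fun i t => δ' i t) hcond
    have hn1 : ∑ w ∈ Finset.range (N + Smax + 1),
        δ' (invσ (sdec u v k w)) (tdec u v k w) * lam ^ w = n := by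
      rw [← hG, ← hsum']
      exact (Finset.sum_congr rfl fun i _ => by rw [hσpow, hai]).symm
    have hn2 : ∑ w ∈ Finset.range (N + Smax + 1), D w * lam ^ w = n :=
      (pow_sum_identity lam n _ (lt_of_lt_of_le hN₀lt (hpowmono N₀ _ (by omega)))).symm
    have hDG : ∀ w < N + Smax + 1,
        δ' (invσ (sdec u v k w)) (tdec u v k w) = D w :=
      pow_sum_unique lam _ _ _ (fun w => h1 _ _) hD (hn1.trans hn2.symm)
    funext i
    show a i = astar i
    rw [hai i, hastardef]
    have hterm : ∀ t < N, δ' i t = δs i t := by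
      intro t htN
      by_cases hT : t ∈ TsetInf u v k
      · obtain ⟨he1, he2⟩ := st_eq u v k hk hu hv (hσS i) hT
        have hwlt : σ i + t < N + Smax + 1 := by
          have := hσle i
          omega
        have hv1 : δ' i t = D (σ i + t) := by
          have := hDG (σ i + t) hwlt
          rw [he1, he2, hinvσσ] at this
          exact this
        by_cases hc : t < N₀
        · rw [hv1]
          simp only [hδsdef]
          exact (if_pos ⟨hT, hc⟩).symm
        · have hD0 : D (σ i + t) = 0 := by
            refine hDz _ (lt_of_lt_of_le hN₀lt (hpowmono N₀ _ ?_))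
            omega
          rw [hv1, hD0]
          simp only [hδsdef]
          exact (if_neg (fun hx : _ ∧ t < N₀ => hc hx.2)).symm
      · have hz : δ' i t = 0 := by
          by_contra hne
          exact hT (h2 i t hne)
        rw [hz]
        simp only [hδsdef]
        exact (if_neg (fun hx : t ∈ TsetInf u v k ∧ t < N₀ => hT hx.1)).symm
    calc ∑ t ∈ Finset.range N, δ' i t * lam ^ t
        = ∑ t ∈ Finset.range N, δs i t * lam ^ t :=
          Finset.sum_congr rfl fun t ht => by
            rw [hterm t (Finset.mem_range.mp ht)]
      _ = ∑ t ∈ Finset.range N₀, δs i t * lam ^ t := by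
          refine (Finset.sum_subset (Finset.range_subset_range.mpr (by omega)) ?_).symm
          intro t _ ht
          have hnotin : ¬ t < N₀ := fun hc => ht (Finset.mem_range.mpr hc)
          have hz : δs i t = 0 := by
            simp only [hδsdef]
            exact if_neg (fun hx : _ ∧ t < N₀ => hnotin hx.2)
          rw [hz, zero_mul]
      _ = astar i := rfl
  have hsetEq : {a : Fin m → ℕ | (∀ i, a i ∈ A) ∧ ∑ i, lamt i * a i = n} = {astar} := by
    ext a
    simp only [Set.mem_setOf_eq, Set.mem_singleton_iff]
    constructor
    · rintro ⟨ha1, ha2⟩; exact huniq a ha1 ha2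
    · rintro rfl; exact ⟨hmemA, hsum⟩
  unfold R
  rw [hsetEq]
  exact Set.ncard_singleton _
end

section
/- Let A ⊊ ℕ and let λ̄ = (λ₁, …, λ_m) be a tuple of positive integers with 1 ≤ λ₁ < ⋯ < λ_m, m ≥ 2, and suppose R_{A,λ̄}(n) = 1 for every nonnegative integer n. If λ ≥ 2 is an integer such that {0, 1, …, λ − 1} ⊆ A but λ ∉ A, then λ₂ = λ. -/
theorem stmt11 (m : ℕ) (hm : 1 < m) (lamt : Fin m → ℕ)
    (hpos : ∀ i, 1 ≤ lamt i) (hmono : StrictMono lamt)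
    (A : Set ℕ) (hA : A ≠ Set.univ)
    (hR : ∀ n : ℕ, R A lamt n = 1)
    (lam : ℕ) (hlam : 2 ≤ lam)
    (hsub : ∀ i < lam, (i : ℕ) ∈ A) (hnot : lam ∉ A) :
    lamt ⟨1, hm⟩ = lam := by
  have hm0 : 0 < m := by omega
  set z : Fin m := ⟨0, hm0⟩ with hz
  set j1 : Fin m := ⟨1, hm⟩ with hj1
  have h0A : (0:ℕ) ∈ A := hsub 0 (by omega)
  have h1A : (1:ℕ) ∈ A := hsub 1 hlam
  have mem_of_ncard : ∀ n (a : Fin m → ℕ),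
      {b : Fin m → ℕ | (∀ i, b i ∈ A) ∧ ∑ i, lamt i * b i = n} = {a} →
      (∀ i, a i ∈ A) ∧ ∑ i, lamt i * a i = n := by
    intro n a ha
    have : a ∈ {b : Fin m → ℕ | (∀ i, b i ∈ A) ∧ ∑ i, lamt i * b i = n} := by
      rw [ha]; exact rfl
    exact this
  -- λ₁ = 1
  have hlam0 : lamt z = 1 := by
    obtain ⟨a, ha⟩ := Set.ncard_eq_one.mp (hR 1)
    obtain ⟨hmem, hsum⟩ := mem_of_ncard 1 a ha
    have hne : ∃ i ∈ Finset.univ, lamt i * a i ≠ 0 := by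
      by_contra h
      push_neg at h
      have : ∑ i, lamt i * a i = 0 := Finset.sum_eq_zero (fun i hi => h i hi)
      omega
    obtain ⟨i, -, hi⟩ := hne
    have hle : lamt i * a i ≤ 1 := hsum ▸
      Finset.single_le_sum (f := fun i => lamt i * a i) (fun _ _ => Nat.zero_le _)
        (Finset.mem_univ i)
    have hzi : lamt z ≤ lamt i := hmono.monotone (by simp [hz, Fin.le_def])
    have := hpos z
    nlinarith [Nat.one_le_iff_ne_zero.mpr (fun h : a i = 0 => hi (by rw [h, mul_zero]))]
  have hj1big : 2 ≤ lamt j1 := by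
    have : lamt z < lamt j1 := hmono (by simp [hz, hj1, Fin.lt_def])
    omega
  -- every n < λ₂ is in A
  have hAsub : ∀ n, n < lamt j1 → n ∈ A := by
    intro n hn
    obtain ⟨a, ha⟩ := Set.ncard_eq_one.mp (hR n)
    obtain ⟨hmem, hsum⟩ := mem_of_ncard n a ha
    have hzero : ∀ i : Fin m, i ≠ z → a i = 0 := by
      intro i hi
      by_contra h
      have h1 : 1 ≤ a i := Nat.one_le_iff_ne_zero.mpr h
      have hji : lamt j1 ≤ lamt i := hmono.monotone (by
        rw [Fin.le_def]
        have : i.val ≠ 0 := fun hv => hi (Fin.ext hv)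
        simpa [hj1] using by omega)
      have hle : lamt i * a i ≤ n := hsum ▸
        Finset.single_le_sum (f := fun i => lamt i * a i) (fun _ _ => Nat.zero_le _)
          (Finset.mem_univ i)
      nlinarith
    have hcol : ∑ i, lamt i * a i = lamt z * a z :=
      Finset.sum_eq_single z (fun i _ hi => by rw [hzero i hi, mul_zero]) (by simp)
    have : a z = n := by rw [hcol, hlam0, one_mul] at hsum; exact hsum
    exact this ▸ hmem z
  -- λ₂ ≤ λ
  have hle : lamt j1 ≤ lam := by
    by_contra h
    exact hnot (hAsub lam (by omega))
  -- λ₂ ≥ λ : otherwise two representations of λ₂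
  rcases eq_or_lt_of_le hle with h | h
  · exact h
  · exfalso
    obtain ⟨x, hx⟩ := Set.ncard_eq_one.mp (hR (lamt j1))
    set b : Fin m → ℕ := fun i => if i = z then lamt j1 else 0 with hb
    set c : Fin m → ℕ := fun i => if i = j1 then 1 else 0 with hc
    have hbsum : ∑ i, lamt i * b i = lamt j1 := by
      rw [Finset.sum_eq_single z (fun i _ hi => by simp [hb, hi]) (by simp)]
      simp [hb, hlam0]
    have hcsum : ∑ i, lamt i * c i = lamt j1 := by
      rw [Finset.sum_eq_single j1 (fun i _ hi => by simp [hc, hi]) (by simp)]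
      simp [hc]
    have hbmem : b ∈ {a : Fin m → ℕ | (∀ i, a i ∈ A) ∧ ∑ i, lamt i * a i = lamt j1} := by
      refine ⟨fun i => ?_, hbsum⟩
      by_cases hi : i = z <;> simp [hb, hi, h0A, hsub _ h]
    have hcmem : c ∈ {a : Fin m → ℕ | (∀ i, a i ∈ A) ∧ ∑ i, lamt i * a i = lamt j1} := by
      refine ⟨fun i => ?_, hcsum⟩
      by_cases hi : i = j1 <;> simp [hc, hi, h0A, h1A]
    rw [hx] at hbmem hcmem
    have hbc : b = c := by rw [Set.mem_singleton_iff.mp hbmem, Set.mem_singleton_iff.mp hcmem]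
    have : b z = c z := by rw [hbc]
    have hzj : z ≠ j1 := by simp [hz, hj1, Fin.ext_iff]
    simp [hb, hc, hzj] at this
    omega
end

section
/- Let A ⊊ ℕ and let λ̄ = (λ₁, …, λ_m) be a tuple of positive integers with 1 ≤ λ₁ < ⋯ < λ_m, and suppose R_{A,λ̄}(n) = 1 for every nonnegative integer n. Let λ ≥ 2 be an integer such that {0, 1, …, λ − 1} ⊆ A but λ ∉ A. Suppose u₁ ≥ 2 is an integer with m > u₁ such that λ_i = λ^{i−1} for all 1 ≤ i ≤ u₁ and λ_{u₁+1} ≠ λ^{u₁}. Then λ_{u₁+1} > λ^{u₁}, and the smallest element of A that is greater than λ − 1 equals λ^{u₁} (i.e., writing A = {a₁ < a₂ < ⋯}, one has a_{λ+1} = λ^{u₁}). -/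
/-- `R_{A,λ̄}(n) = |{(a₁,…,a_m) ∈ A^m : λ₁a₁ + ⋯ + λ_m a_m = n}|`. -/


lemma digitsum (lam k n : ℕ) :
    ∑ i ∈ Finset.range k, lam ^ i * (n / lam ^ i % lam) = n % lam ^ k := by
  induction k with
  | zero => simp [Nat.mod_one]
  | succ k ih => rw [Finset.sum_range_succ, ih, pow_succ, Nat.mod_mul]

lemma sumlt (lam : ℕ) (_hlam : 1 ≤ lam) :
    ∀ (k : ℕ) (d : ℕ → ℕ), (∀ j, j < k → d j < lam) →
      ∑ j ∈ Finset.range k, lam ^ j * d j < lam ^ k := by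
  intro k
  induction k with
  | zero => intro d _; simp
  | succ k ih =>
    intro d hd
    rw [Finset.sum_range_succ]
    have h1 : ∑ j ∈ Finset.range k, lam ^ j * d j < lam ^ k :=
      ih d (fun j hj => hd j (by omega))
    calc ∑ j ∈ Finset.range k, lam ^ j * d j + lam ^ k * d k
        < lam ^ k + lam ^ k * d k := by omega
      _ = lam ^ k * (d k + 1) := by ring
      _ ≤ lam ^ k * lam := Nat.mul_le_mul_left _ (hd k (by omega))
      _ = lam ^ (k + 1) := by ring

lemma finsum_eq (m u : ℕ) (hum : u ≤ m) (g : Fin m → ℕ)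
    (hg : ∀ i : Fin m, u ≤ i.val → g i = 0) :
    ∑ i : Fin m, g i = ∑ j ∈ Finset.range u, (if h : j < m then g ⟨j, h⟩ else 0) := by
  have h1 : ∑ i : Fin m, g i
      = ∑ j ∈ Finset.range m, (if h : j < m then g ⟨j, h⟩ else 0) := by
    rw [← Fin.sum_univ_eq_sum_range (fun j => if h : j < m then g ⟨j, h⟩ else 0) m]
    exact Finset.sum_congr rfl fun i _ => by simp
  rw [h1]
  symm
  apply Finset.sum_subset (Finset.range_subset_range.2 hum)
  intro j hj hju
  simp only [Finset.mem_range] at hj hju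
  rw [dif_pos hj]
  exact hg _ (le_of_not_gt hju)

theorem stmt12 (m : ℕ) (lamt : Fin m → ℕ)
    (hpos : ∀ i, 1 ≤ lamt i) (hmono : StrictMono lamt)
    (A : Set ℕ) (hA : A ≠ Set.univ)
    (hR : ∀ n : ℕ, R A lamt n = 1)
    (lam : ℕ) (hlam : 2 ≤ lam)
    (hsub : ∀ i < lam, (i : ℕ) ∈ A) (hnot : lam ∉ A)
    (u₁ : ℕ) (hu₁ : 2 ≤ u₁) (hm : u₁ < m)
    (hval : ∀ i : ℕ, (hi : i < u₁) → lamt ⟨i, lt_trans hi hm⟩ = lam ^ i)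
    (hne : lamt ⟨u₁, hm⟩ ≠ lam ^ u₁) :
    lam ^ u₁ < lamt ⟨u₁, hm⟩ ∧
    IsLeast {x : ℕ | x ∈ A ∧ lam - 1 < x} (lam ^ u₁) := by
  have h0u : 0 < u₁ := by omega
  -- uniqueness of representations
  have huniq : ∀ (n : ℕ) (a b : Fin m → ℕ),
      (∀ i, a i ∈ A) → (∑ i, lamt i * a i = n) →
      (∀ i, b i ∈ A) → (∑ i, lamt i * b i = n) → a = b := by
    intro n a b ha1 ha2 hb1 hb2
    have hn := hR n
    simp only [R] at hn
    obtain ⟨c, hc⟩ := Set.ncard_eq_one.1 hn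
    have h1 : a ∈ {a : Fin m → ℕ | (∀ i, a i ∈ A) ∧ ∑ i, lamt i * a i = n} := ⟨ha1, ha2⟩
    have h2 : b ∈ {a : Fin m → ℕ | (∀ i, a i ∈ A) ∧ ∑ i, lamt i * a i = n} := ⟨hb1, hb2⟩
    rw [hc, Set.mem_singleton_iff] at h1 h2
    rw [h1, h2]
  -- the base-lam digit representation
  have hdigit : ∀ x : ℕ, x < lam ^ u₁ →
      (∀ i : Fin m, (if _ : i.val < u₁ then x / lam ^ i.val % lam else 0) ∈ A) ∧
      ∑ i : Fin m, lamt i * (if _ : i.val < u₁ then x / lam ^ i.val % lam else 0) = x := by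
    intro x hx
    constructor
    · intro i
      split
      · exact hsub _ (Nat.mod_lt _ (by omega))
      · exact hsub 0 (by omega)
    · have hz : ∀ i : Fin m, u₁ ≤ i.val →
          lamt i * (if _ : i.val < u₁ then x / lam ^ i.val % lam else 0) = 0 := by
        intro i hi
        rw [dif_neg (not_lt.2 hi), mul_zero]
      rw [finsum_eq m u₁ hm.le _ hz]
      have hcong : ∀ j ∈ Finset.range u₁,
          (if h : j < m then lamt ⟨j, h⟩ * (if _ : j < u₁ then x / lam ^ j % lam else 0) else 0)
          = lam ^ j * (x / lam ^ j % lam) := by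
        intro j hj
        rw [Finset.mem_range] at hj
        rw [dif_pos (lt_trans hj hm), dif_pos hj, hval j hj]
      rw [Finset.sum_congr rfl hcong, digitsum, Nat.mod_eq_of_lt hx]
  -- sum of an indicator tuple
  have hind : ∀ (i₀ : Fin m) (v : ℕ),
      ∑ i : Fin m, lamt i * (if i = i₀ then v else 0) = lamt i₀ * v := by
    intro i₀ v
    rw [Finset.sum_eq_single i₀]
    · rw [if_pos rfl]
    · intro i _ hi; rw [if_neg hi, mul_zero]
    · intro h; exact absurd (Finset.mem_univ i₀) h
  -- Part 1
  have key1 : lam ^ u₁ < lamt ⟨u₁, hm⟩ := by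
    by_contra hc
    have hμ : lamt ⟨u₁, hm⟩ < lam ^ u₁ := lt_of_le_of_ne (not_lt.1 hc) hne
    set μ := lamt ⟨u₁, hm⟩ with hμdef
    have hab := huniq μ (fun i => if i = ⟨u₁, hm⟩ then 1 else 0)
      (fun i => if _ : i.val < u₁ then μ / lam ^ i.val % lam else 0)
      (fun i => by
        show (if i = ⟨u₁, hm⟩ then 1 else 0) ∈ A
        by_cases h : i = ⟨u₁, hm⟩
        · rw [if_pos h]; exact hsub 1 (by omega)
        · rw [if_neg h]; exact hsub 0 (by omega))
      (by rw [hind, mul_one])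
      ((hdigit μ hμ).1) ((hdigit μ hμ).2)
    have heval := congrFun hab ⟨u₁, hm⟩
    simp at heval
  -- small elements of A are < lam
  have hsmall : ∀ x ∈ A, x < lam ^ u₁ → x < lam := by
    intro x hxA hx
    have hi0 : (0 : ℕ) < m := by omega
    have hab := huniq x (fun i => if i = ⟨0, hi0⟩ then x else 0)
      (fun i => if _ : i.val < u₁ then x / lam ^ i.val % lam else 0)
      (fun i => by
        show (if i = ⟨0, hi0⟩ then x else 0) ∈ A
        by_cases h : i = ⟨0, hi0⟩
        · rw [if_pos h]; exact hxA
        · rw [if_neg h]; exact hsub 0 (by omega))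
      (by rw [hind]; rw [show lamt ⟨0, hi0⟩ = lam ^ 0 from hval 0 h0u, pow_zero, one_mul])
      ((hdigit x hx).1) ((hdigit x hx).2)
    have heval := congrFun hab ⟨0, hi0⟩
    simp [h0u] at heval
    rw [heval]
    exact Nat.mod_lt _ (by omega)
  -- lam ^ u₁ ∈ A
  have hmem : lam ^ u₁ ∈ A := by
    have hn := hR (lam ^ u₁)
    simp only [R] at hn
    obtain ⟨c, hc⟩ := Set.ncard_eq_one.1 hn
    have hcm : c ∈ {a : Fin m → ℕ | (∀ i, a i ∈ A) ∧ ∑ i, lamt i * a i = lam ^ u₁} := by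
      rw [hc]; exact Set.mem_singleton c
    obtain ⟨hcA, hcsum⟩ := hcm
    clear hc hn
    have hbound : ∀ i : Fin m, lamt i * c i ≤ lam ^ u₁ := by
      intro i
      rw [← hcsum]
      exact Finset.single_le_sum (f := fun i => lamt i * c i)
        (fun j _ => Nat.zero_le _) (Finset.mem_univ i)
    have htail : ∀ i : Fin m, u₁ ≤ i.val → c i = 0 := by
      intro i hi
      by_contra h0
      have h2 : lamt ⟨u₁, hm⟩ ≤ lamt i := hmono.monotone (by
        rw [Fin.le_def]; exact hi)
      have h3 : lamt i ≤ lamt i * c i :=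
        Nat.le_mul_of_pos_right _ (Nat.pos_of_ne_zero h0)
      have h4 := hbound i
      omega
    have hz : ∀ i : Fin m, u₁ ≤ i.val → lamt i * c i = 0 := by
      intro i hi; rw [htail i hi, mul_zero]
    have hres : ∑ j ∈ Finset.range u₁,
        (if h : j < m then lamt ⟨j, h⟩ * c ⟨j, h⟩ else 0) = lam ^ u₁ := by
      rw [← finsum_eq m u₁ hm.le _ hz, hcsum]
    have hres2 : ∑ j ∈ Finset.range u₁,
        lam ^ j * (if h : j < m then c ⟨j, h⟩ else 0) = lam ^ u₁ := by
      rw [← hres]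
      apply Finset.sum_congr rfl
      intro j hj
      rw [Finset.mem_range] at hj
      rw [dif_pos (lt_trans hj hm), dif_pos (lt_trans hj hm), hval j hj]
    have hbig : ∃ i : Fin m, i.val < u₁ ∧ lam ^ u₁ ≤ c i := by
      by_contra h
      push_neg at h
      have hd : ∀ j, j < u₁ → (if h : j < m then c ⟨j, h⟩ else 0) < lam := by
        intro j hj
        rw [dif_pos (lt_trans hj hm)]
        exact hsmall _ (hcA _) (h _ hj)
      have := sumlt lam (by omega) u₁ _ hd
      omega
    obtain ⟨i, _, hile⟩ := hbig
    have h1 := hbound i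
    have h2 : c i ≤ lamt i * c i := Nat.le_mul_of_pos_left _ (hpos i)
    have h3 : c i = lam ^ u₁ := by omega
    rw [← h3]
    exact hcA i
  refine ⟨key1, ⟨hmem, ?_⟩, ?_⟩
  · have : lam ≤ lam ^ u₁ := Nat.le_self_pow (by omega) lam
    omega
  · intro x hx
    obtain ⟨hxA, hxgt⟩ := hx
    by_contra hc
    have := hsmall x hxA (by omega)
    omega
end
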